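/- arXiv:1910.01749 — 11 statements merged into one kernel-verified Lean document; each statement's English description precedes it below -/
import Mathlib

section
/- Let f : [n] → ℝ and let T₀ be a set of pairwise disjoint increasing subsequences of f of length k₀. Then there exists a set T of pairwise disjoint increasing length-k₀ subsequences of f, using only indices appearing in T₀, with |T| ≥ |T₀|/k₀, and satisfying: for any two tuples (i₁,…,i_{k₀}), (j₁,…,j_{k₀}) ∈ T and any ℓ ∈ [k₀−1], if i₁ < j₁, i_ℓ < j_ℓ and i_{ℓ+1} > j_{ℓ+1}, then f(i_{ℓ+1}) > f(j_{ℓ+1}). -/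
open scoped Classical

noncomputable def gfun {n k₀ : ℕ} (hk : 0 < k₀) (f : Fin n → ℝ)
    (A : Finset (Fin k₀ → Fin n)) (d : Fin n) : ℕ → Fin n
  | 0 =>
      if h : (A.image (fun u => u ⟨0, hk⟩)).Nonempty then
        (A.image (fun u => u ⟨0, hk⟩)).min' h
      else d
  | (ℓ + 1) =>
      if hℓ : ℓ + 1 < k₀ then
        if h : ((A.image (fun u => u ⟨ℓ + 1, hℓ⟩)).filter
            (fun x => gfun hk f A d ℓ < x ∧ f (gfun hk f A d ℓ) < f x)).Nonempty then
          ((A.image (fun u => u ⟨ℓ + 1, hℓ⟩)).filter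
            (fun x => gfun hk f A d ℓ < x ∧ f (gfun hk f A d ℓ) < f x)).min' h
        else d
      else d

lemma gfun_zero_min {n k₀ : ℕ} (hk : 0 < k₀) (f : Fin n → ℝ)
    (A : Finset (Fin k₀ → Fin n)) (d : Fin n) {u} (hu : u ∈ A) :
    gfun hk f A d 0 ≤ u ⟨0, hk⟩ := by
  have hne : (A.image (fun u => u ⟨0, hk⟩)).Nonempty :=
    ⟨_, Finset.mem_image_of_mem _ hu⟩
  simp only [gfun, dif_pos hne]
  exact Finset.min'_le _ _ (Finset.mem_image_of_mem _ hu)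

lemma gfun_mem {n k₀ : ℕ} (hk : 0 < k₀) (f : Fin n → ℝ)
    (A : Finset (Fin k₀ → Fin n)) (d : Fin n) (hA : A.Nonempty)
    (hmono : ∀ s ∈ A, StrictMono s ∧ StrictMono (f ∘ s)) :
    ∀ ℓ, ∀ h : ℓ < k₀, ∃ u ∈ A, u ⟨ℓ, h⟩ = gfun hk f A d ℓ := by
  intro ℓ
  induction ℓ with
  | zero =>
    intro h
    have hne : (A.image (fun u => u ⟨0, hk⟩)).Nonempty := hA.image _
    obtain ⟨u, hu, hu'⟩ := Finset.mem_image.1 (Finset.min'_mem _ hne)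
    exact ⟨u, hu, by simp only [gfun, dif_pos hne]; exact hu'⟩
  | succ ℓ ih =>
    intro h
    obtain ⟨u, hu, hu'⟩ := ih (by omega)
    have h1 : gfun hk f A d ℓ < u ⟨ℓ + 1, h⟩ := by
      rw [← hu']
      exact (hmono u hu).1 (by simp [Fin.lt_def])
    have h2 : f (gfun hk f A d ℓ) < f (u ⟨ℓ + 1, h⟩) := by
      rw [← hu']
      exact (hmono u hu).2 (show (⟨ℓ, by omega⟩ : Fin k₀) < ⟨ℓ + 1, h⟩ by simp [Fin.lt_def])
    have hne : ((A.image (fun u => u ⟨ℓ + 1, h⟩)).filter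
        (fun x => gfun hk f A d ℓ < x ∧ f (gfun hk f A d ℓ) < f x)).Nonempty :=
      ⟨_, Finset.mem_filter.2 ⟨Finset.mem_image_of_mem _ hu, h1, h2⟩⟩
    have hmem := Finset.min'_mem _ hne
    rw [Finset.mem_filter] at hmem
    obtain ⟨w, hw, hw'⟩ := Finset.mem_image.1 hmem.1
    refine ⟨w, hw, ?_⟩
    simp only [gfun, dif_pos h, dif_pos hne]
    exact hw'

lemma gfun_step {n k₀ : ℕ} (hk : 0 < k₀) (f : Fin n → ℝ)
    (A : Finset (Fin k₀ → Fin n)) (d : Fin n) (hA : A.Nonempty)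
    (hmono : ∀ s ∈ A, StrictMono s ∧ StrictMono (f ∘ s))
    (ℓ : ℕ) (hℓ : ℓ + 1 < k₀) :
    gfun hk f A d ℓ < gfun hk f A d (ℓ + 1) ∧
      f (gfun hk f A d ℓ) < f (gfun hk f A d (ℓ + 1)) := by
  obtain ⟨u, hu, hu'⟩ := gfun_mem hk f A d hA hmono ℓ (by omega)
  have h1 : gfun hk f A d ℓ < u ⟨ℓ + 1, hℓ⟩ := by
    rw [← hu']; exact (hmono u hu).1 (by simp [Fin.lt_def])
  have h2 : f (gfun hk f A d ℓ) < f (u ⟨ℓ + 1, hℓ⟩) := by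
    rw [← hu']
    exact (hmono u hu).2 (show (⟨ℓ, by omega⟩ : Fin k₀) < ⟨ℓ + 1, hℓ⟩ by simp [Fin.lt_def])
  have hne : ((A.image (fun u => u ⟨ℓ + 1, hℓ⟩)).filter
      (fun x => gfun hk f A d ℓ < x ∧ f (gfun hk f A d ℓ) < f x)).Nonempty :=
    ⟨_, Finset.mem_filter.2 ⟨Finset.mem_image_of_mem _ hu, h1, h2⟩⟩
  have hmem := Finset.min'_mem _ hne
  rw [Finset.mem_filter] at hmem
  have heq : gfun hk f A d (ℓ + 1) = ((A.image (fun u => u ⟨ℓ + 1, hℓ⟩)).filter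
      (fun x => gfun hk f A d ℓ < x ∧ f (gfun hk f A d ℓ) < f x)).min' hne := by
    conv_lhs => rw [gfun]
    rw [dif_pos hℓ, dif_pos hne]
  rw [heq]
  exact hmem.2

lemma gfun_succ_min {n k₀ : ℕ} (hk : 0 < k₀) (f : Fin n → ℝ)
    (A : Finset (Fin k₀ → Fin n)) (d : Fin n)
    (ℓ : ℕ) (hℓ : ℓ + 1 < k₀) {u} (hu : u ∈ A)
    (h1 : gfun hk f A d ℓ < u ⟨ℓ + 1, hℓ⟩)
    (h2 : f (gfun hk f A d ℓ) < f (u ⟨ℓ + 1, hℓ⟩)) :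
    gfun hk f A d (ℓ + 1) ≤ u ⟨ℓ + 1, hℓ⟩ := by
  have hne : ((A.image (fun u => u ⟨ℓ + 1, hℓ⟩)).filter
      (fun x => gfun hk f A d ℓ < x ∧ f (gfun hk f A d ℓ) < f x)).Nonempty :=
    ⟨_, Finset.mem_filter.2 ⟨Finset.mem_image_of_mem _ hu, h1, h2⟩⟩
  simp only [gfun, dif_pos hℓ, dif_pos hne]
  exact Finset.min'_le _ _ (Finset.mem_filter.2 ⟨Finset.mem_image_of_mem _ hu, h1, h2⟩)

lemma aux_main {n k₀ : ℕ} (hk : 0 < k₀) (f : Fin n → ℝ) :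
    ∀ N : ℕ, ∀ A : Finset (Fin k₀ → Fin n), A.card ≤ N →
      (∀ s ∈ A, StrictMono s ∧ StrictMono (f ∘ s)) →
      (∀ s ∈ A, ∀ t ∈ A, s ≠ t → ∀ a b, s a ≠ t b) →
      ∃ T : Finset (Fin k₀ → Fin n),
        (∀ s ∈ T, StrictMono s ∧ StrictMono (f ∘ s)) ∧
        (∀ s ∈ T, ∀ t ∈ T, s ≠ t → ∀ a b, s a ≠ t b) ∧
        (∀ s ∈ T, ∀ p : Fin k₀, ∃ u ∈ A, u p = s p) ∧
        A.card ≤ T.card * k₀ ∧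
        (∀ i ∈ T, ∀ j ∈ T, ∀ ℓ : ℕ, ∀ hℓ : ℓ + 1 < k₀,
          i ⟨0, hk⟩ < j ⟨0, hk⟩ →
          i ⟨ℓ, Nat.lt_of_succ_lt hℓ⟩ < j ⟨ℓ, Nat.lt_of_succ_lt hℓ⟩ →
          j ⟨ℓ + 1, hℓ⟩ < i ⟨ℓ + 1, hℓ⟩ →
          f (j ⟨ℓ + 1, hℓ⟩) < f (i ⟨ℓ + 1, hℓ⟩)) := by
  intro N
  induction N with
  | zero =>
    intro A hcard _ _
    have : A = ∅ := Finset.card_eq_zero.mp (Nat.le_zero.mp hcard)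
    subst this
    exact ⟨∅, by simp⟩
  | succ N ih =>
    intro A hcard hmono hdisj
    rcases A.eq_empty_or_nonempty with rfl | hA
    · exact ⟨∅, by simp⟩
    obtain ⟨u₀, hu₀⟩ := hA
    set d := u₀ ⟨0, hk⟩ with hd
    set g := gfun hk f A d with hg
    set t : Fin k₀ → Fin n := fun p => g p.val with ht
    have hA' : A.Nonempty := ⟨u₀, hu₀⟩
    have hmem : ∀ ℓ, ∀ h : ℓ < k₀, ∃ u ∈ A, u ⟨ℓ, h⟩ = g ℓ :=
      gfun_mem hk f A d hA' hmono
    have hstep : ∀ ℓ, ℓ + 1 < k₀ → g ℓ < g (ℓ + 1) ∧ f (g ℓ) < f (g (ℓ + 1)) :=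
      fun ℓ hℓ => gfun_step hk f A d hA' hmono ℓ hℓ
    have hgmono : ∀ a b : ℕ, a < b → b < k₀ → g a < g b ∧ f (g a) < f (g b) := by
      intro a b hab hb
      induction b with
      | zero => omega
      | succ c ihc =>
        rcases Nat.lt_succ_iff_lt_or_eq.mp hab with h | h
        · have h1 := ihc h (by omega)
          have h2 := hstep c hb
          exact ⟨h1.1.trans h2.1, h1.2.trans h2.2⟩
        · subst h; exact hstep a hb
    have htmono : StrictMono t := fun a b hab => (hgmono a.val b.val hab b.isLt).1
    have htfmono : StrictMono (f ∘ t) := fun a b hab => (hgmono a.val b.val hab b.isLt).2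
    -- the used set
    set U := A.filter (fun u => ∃ p : Fin k₀, u p = t p) with hU
    have hUsub : U ⊆ A := Finset.filter_subset _ _
    have hUcard : U.card ≤ k₀ := by
      have h := Finset.card_le_card_of_injOn
        (f := fun u : Fin k₀ → Fin n =>
          if h : ∃ p : Fin k₀, u p = t p then h.choose else ⟨0, hk⟩)
        (s := U) (t := (Finset.univ : Finset (Fin k₀)))
        (fun _ _ => Finset.mem_univ _) ?_
      · simpa using h
      · intro u hu v hv huv
        rw [Finset.coe_filter] at hu hv
        obtain ⟨huA, hup⟩ := hu
        obtain ⟨hvA, hvp⟩ := hv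
        simp only [dif_pos hup, dif_pos hvp] at huv
        by_contra hne
        have h1 : u hup.choose = t hup.choose := hup.choose_spec
        have h2 : v hvp.choose = t hvp.choose := hvp.choose_spec
        rw [huv] at h1
        exact hdisj u huA v hvA hne _ _ (h1.trans h2.symm)
    have hUne : U.Nonempty := by
      obtain ⟨w, hw, hw'⟩ := hmem 0 hk
      exact ⟨w, Finset.mem_filter.2 ⟨hw, ⟨⟨0, hk⟩, hw'⟩⟩⟩
    set A' := A \ U with hA'def
    have hA'cardeq : A'.card + U.card = A.card := Finset.card_sdiff_add_card_eq_card hUsub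
    have hA'lt : A'.card ≤ N := by
      have : 1 ≤ U.card := Finset.card_pos.2 hUne
      omega
    obtain ⟨T', hT'mono, hT'disj, hT'pos, hT'card, hT'int⟩ :=
      ih A' hA'lt (fun s hs => hmono s (Finset.mem_sdiff.1 hs).1)
        (fun s hs t' ht' => hdisj s (Finset.mem_sdiff.1 hs).1 t' (Finset.mem_sdiff.1 ht').1)
    -- t is disjoint from everything in T'
    have hdisjT : ∀ s ∈ T', ∀ a b : Fin k₀, t a ≠ s b := by
      intro s hs a b heq
      obtain ⟨u, hu, hub⟩ := hT'pos s hs b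
      obtain ⟨w, hw, hwa⟩ := hmem a.val a.isLt
      have hwa' : w a = t a := hwa
      have hwU : w ∈ U := Finset.mem_filter.2 ⟨hw, a, hwa'⟩
      have hne : w ≠ u := by
        rintro rfl
        exact (Finset.mem_sdiff.1 hu).2 hwU
      exact hdisj w hw u (Finset.mem_sdiff.1 hu).1 hne a b (by rw [hwa', heq, ← hub])
    have hT0 : ∀ s ∈ T', t ⟨0, hk⟩ < s ⟨0, hk⟩ := by
      intro s hs
      obtain ⟨u, hu, hub⟩ := hT'pos s hs ⟨0, hk⟩
      have h1 : g 0 ≤ u ⟨0, hk⟩ := gfun_zero_min hk f A d (Finset.mem_sdiff.1 hu).1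
      rw [hub] at h1
      exact lt_of_le_of_ne h1 (hdisjT s hs _ _)
    have htnotmem : t ∉ T' := fun h => hdisjT t h ⟨0, hk⟩ ⟨0, hk⟩ rfl
    refine ⟨insert t T', ?_, ?_, ?_, ?_, ?_⟩
    · intro s hs
      rcases Finset.mem_insert.1 hs with rfl | hs
      · exact ⟨htmono, htfmono⟩
      · exact hT'mono s hs
    · intro s hs t' ht' hne a b
      rcases Finset.mem_insert.1 hs with rfl | hs <;>
        rcases Finset.mem_insert.1 ht' with rfl | ht'
      · exact absurd rfl hne
      · exact hdisjT t' ht' a b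
      · exact fun h => hdisjT s hs b a h.symm
      · exact hT'disj s hs t' ht' hne a b
    · intro s hs p
      rcases Finset.mem_insert.1 hs with rfl | hs
      · obtain ⟨u, hu, hu'⟩ := hmem p.val p.isLt
        exact ⟨u, hu, hu'⟩
      · obtain ⟨u, hu, hu'⟩ := hT'pos s hs p
        exact ⟨u, (Finset.mem_sdiff.1 hu).1, hu'⟩
    · rw [Finset.card_insert_of_notMem htnotmem, add_mul, one_mul]
      omega
    · intro i hi j hj ℓ hℓ h0 hlt hcross
      rcases Finset.mem_insert.1 hi with rfl | hi <;>
        rcases Finset.mem_insert.1 hj with rfl | hj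
      · exact absurd h0 (lt_irrefl _)
      · -- main case : i = t, j ∈ T'
        by_contra hcon
        push_neg at hcon
        obtain ⟨u, hu, hub⟩ := hT'pos j hj ⟨ℓ + 1, hℓ⟩
        have huA : u ∈ A := (Finset.mem_sdiff.1 hu).1
        have h1 : g ℓ < u ⟨ℓ + 1, hℓ⟩ := by
          rw [hub]
          calc g ℓ = t ⟨ℓ, by omega⟩ := rfl
            _ < j ⟨ℓ, by omega⟩ := hlt
            _ < j ⟨ℓ + 1, hℓ⟩ := (hT'mono j hj).1 (by simp [Fin.lt_def])
        have h2 : f (g ℓ) < f (u ⟨ℓ + 1, hℓ⟩) := by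
          rw [hub]
          calc f (g ℓ) < f (g (ℓ + 1)) := (hstep ℓ hℓ).2
            _ = f (t ⟨ℓ + 1, hℓ⟩) := rfl
            _ ≤ f (j ⟨ℓ + 1, hℓ⟩) := hcon
        have h3 := gfun_succ_min hk f A d ℓ hℓ huA h1 h2
        rw [hub] at h3
        exact absurd h3 (not_le.2 hcross)
      · exact absurd h0 (asymm (hT0 i hi))
      · exact hT'int i hi j hj ℓ hℓ h0 hlt hcross

/-- The greedy rematching lemma: from a family `T₀` of disjoint length-`k₀` increasing
subsequences of `f` one can extract a family `T` (supported on the indices of `T₀`) of size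
at least `|T₀|/k₀` satisfying the interleaving property. -/
theorem stmt1 (n k₀ : ℕ) (hk : 0 < k₀) (f : Fin n → ℝ)
    (T₀ : Finset (Fin k₀ → Fin n))
    (hT₀ : ∀ s ∈ T₀, StrictMono s ∧ StrictMono (f ∘ s))
    (hdisj : ∀ s ∈ T₀, ∀ t ∈ T₀, s ≠ t → ∀ a b, s a ≠ t b) :
    ∃ T : Finset (Fin k₀ → Fin n),
      (∀ s ∈ T, StrictMono s ∧ StrictMono (f ∘ s)) ∧
      (∀ s ∈ T, ∀ t ∈ T, s ≠ t → ∀ a b, s a ≠ t b) ∧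
      (∀ s ∈ T, ∀ a, ∃ t ∈ T₀, ∃ b, s a = t b) ∧
      (T₀.card : ℝ) / k₀ ≤ T.card ∧
      (∀ i ∈ T, ∀ j ∈ T, ∀ ℓ : ℕ, ∀ hℓ : ℓ + 1 < k₀,
        i ⟨0, hk⟩ < j ⟨0, hk⟩ →
        i ⟨ℓ, by omega⟩ < j ⟨ℓ, by omega⟩ →
        j ⟨ℓ + 1, hℓ⟩ < i ⟨ℓ + 1, hℓ⟩ →
        f (j ⟨ℓ + 1, hℓ⟩) < f (i ⟨ℓ + 1, hℓ⟩)) := by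
  obtain ⟨T, h1, h2, h3, h4, h5⟩ := aux_main hk f T₀.card T₀ le_rfl hT₀ hdisj
  refine ⟨T, h1, h2, ?_, ?_, h5⟩
  · intro s hs a
    obtain ⟨u, hu, hu'⟩ := h3 s hs a
    exact ⟨u, hu, a, hu'.symm⟩
  · rw [div_le_iff₀ (by exact_mod_cast hk)]
    exact_mod_cast h4
end

section
/- For n a power of 2 and any nonempty finite subset Q ⊆ [n], the number of indices i ∈ [log₂ n] for which there exist x, y ∈ Q whose binary representations differ most significantly at bit i, is at most |Q| − 1. -/
open scoped Classical


lemma two_pow_xor_eq_add {m a : ℕ} (h : a < 2 ^ m) : 2 ^ m ^^^ a = 2 ^ m + a := by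
  apply Nat.eq_of_testBit_eq
  intro j
  rcases lt_trichotomy j m with hj | rfl | hj
  · rw [Nat.testBit_xor, Nat.testBit_two_pow_of_ne (by omega),
      Nat.testBit_two_pow_add_gt hj]
    simp
  · rw [Nat.testBit_xor, Nat.testBit_two_pow_self, Nat.testBit_two_pow_add_eq,
      Nat.testBit_lt_two_pow h]
    simp
  · have h1 : a < 2 ^ j := lt_trans h (Nat.pow_lt_pow_right one_lt_two hj)
    have h2 : 2 ^ m + a < 2 ^ j := by
      calc 2 ^ m + a < 2 ^ m + 2 ^ m := by omega
      _ = 2 ^ (m + 1) := by ring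
      _ ≤ 2 ^ j := Nat.pow_le_pow_right (by norm_num) (by omega)
    rw [Nat.testBit_xor, Nat.testBit_two_pow_of_ne (by omega),
      Nat.testBit_lt_two_pow h1, Nat.testBit_lt_two_pow h2]
    simp

lemma xor_shift {m a b : ℕ} (ha : a < 2 ^ m) (hb : b < 2 ^ m) :
    (2 ^ m + a) ^^^ (2 ^ m + b) = a ^^^ b := by
  rw [← two_pow_xor_eq_add ha, ← two_pow_xor_eq_add hb, Nat.xor_comm (2 ^ m) a,
    Nat.xor_assoc, ← Nat.xor_assoc (2 ^ m), Nat.xor_self, Nat.zero_xor]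

lemma log_xor_lt {m x y : ℕ} (hxy : x ≠ y) (hx : x < 2 ^ m) (hy : y < 2 ^ m) :
    Nat.log 2 (x ^^^ y) < m := by
  have h0 : x ^^^ y ≠ 0 := by
    intro h
    exact hxy (by rw [← Nat.xor_zero x, ← Nat.xor_self y, ← Nat.xor_assoc, h, Nat.zero_xor])
  exact Nat.log_lt_of_lt_pow h0 (Nat.xor_lt_two_pow hx hy)

lemma log_xor_cross {m x y : ℕ} (hx : x < 2 ^ m) (hy : 2 ^ m ≤ y) (hy' : y < 2 ^ (m + 1)) :
    Nat.log 2 (x ^^^ y) = m := by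
  have h2 : 2 ^ (m + 1) = 2 ^ m + 2 ^ m := by ring
  have hb : y - 2 ^ m < 2 ^ m := by omega
  have key : x ^^^ y = 2 ^ m + (x ^^^ (y - 2 ^ m)) := by
    conv_lhs => rw [show y = 2 ^ m + (y - 2 ^ m) by omega]
    rw [← two_pow_xor_eq_add hb, ← Nat.xor_assoc, Nat.xor_comm x, Nat.xor_assoc,
      two_pow_xor_eq_add (Nat.xor_lt_two_pow hx hb)]
  have hlt : x ^^^ (y - 2 ^ m) < 2 ^ m := Nat.xor_lt_two_pow hx hb
  rw [key]
  exact Nat.log_eq_of_pow_le_of_lt_pow (by omega) (by omega)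

lemma aux_stmt3 (m : ℕ) : ∀ Q : Finset ℕ, Q ⊆ Finset.range (2 ^ m) → Q.Nonempty →
    ((Finset.range m).filter (fun i =>
        ∃ x ∈ Q, ∃ y ∈ Q, x ≠ y ∧ Nat.log 2 (x ^^^ y) = i)).card ≤ Q.card - 1 := by
  induction m with
  | zero => intro Q _ _; simp
  | succ m ih =>
    intro Q hQ hne
    have h2 : 2 ^ (m + 1) = 2 ^ m + 2 ^ m := by ring
    set Q0 : Finset ℕ := Q.filter (fun x => x < 2 ^ m) with hQ0def
    set Q1 : Finset ℕ := Q.filter (fun x => ¬ x < 2 ^ m) with hQ1def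
    have hcard : Q0.card + Q1.card = Q.card := Finset.card_filter_add_card_filter_not _
    set Q1' : Finset ℕ := Q1.image (fun x => x - 2 ^ m) with hQ1'def
    have hQ1mem : ∀ x ∈ Q1, 2 ^ m ≤ x ∧ x < 2 ^ (m + 1) := by
      intro x hx
      rw [hQ1def, Finset.mem_filter] at hx
      have := hQ hx.1
      rw [Finset.mem_range] at this
      omega
    have hcard1 : Q1'.card = Q1.card := by
      apply Finset.card_image_of_injOn
      intro a ha b hb hab
      have := hQ1mem a ha
      have := hQ1mem b hb
      dsimp only at hab
      omega
    have hQ0sub : Q0 ⊆ Finset.range (2 ^ m) := by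
      intro x hx
      rw [hQ0def, Finset.mem_filter] at hx
      rw [Finset.mem_range]; exact hx.2
    have hQ1'sub : Q1' ⊆ Finset.range (2 ^ m) := by
      intro a ha
      rw [hQ1'def, Finset.mem_image] at ha
      obtain ⟨x, hx, rfl⟩ := ha
      have := hQ1mem x hx
      rw [Finset.mem_range]; omega
    set F := ((Finset.range (m + 1)).filter (fun i =>
        ∃ x ∈ Q, ∃ y ∈ Q, x ≠ y ∧ Nat.log 2 (x ^^^ y) = i)) with hF
    set F0 := ((Finset.range m).filter (fun i =>
        ∃ x ∈ Q0, ∃ y ∈ Q0, x ≠ y ∧ Nat.log 2 (x ^^^ y) = i)) with hF0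
    set F1 := ((Finset.range m).filter (fun i =>
        ∃ x ∈ Q1', ∃ y ∈ Q1', x ≠ y ∧ Nat.log 2 (x ^^^ y) = i)) with hF1
    -- case analysis on membership
    have hmemQ0 : ∀ x ∈ Q, x < 2 ^ m → x ∈ Q0 := by
      intro x hx h; rw [hQ0def, Finset.mem_filter]; exact ⟨hx, h⟩
    have hmemQ1 : ∀ x ∈ Q, 2 ^ m ≤ x → x ∈ Q1 := by
      intro x hx h; rw [hQ1def, Finset.mem_filter]; exact ⟨hx, by omega⟩
    have hQlt : ∀ x ∈ Q, x < 2 ^ (m + 1) := by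
      intro x hx; have := hQ hx; rwa [Finset.mem_range] at this
    have key : ∀ i ∈ F, i ∈ F0 ∨ i ∈ F1 ∨ (i = m ∧ Q0.Nonempty ∧ Q1.Nonempty) := by
      intro i hi
      rw [hF, Finset.mem_filter] at hi
      obtain ⟨-, x, hx, y, hy, hxy, hlog⟩ := hi
      rcases lt_or_ge x (2 ^ m) with hxlt | hxge <;> rcases lt_or_ge y (2 ^ m) with hylt | hyge
      · left
        rw [hF0, Finset.mem_filter, Finset.mem_range]
        refine ⟨hlog ▸ log_xor_lt hxy hxlt hylt, x, hmemQ0 x hx hxlt, y, hmemQ0 y hy hylt,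
          hxy, hlog⟩
      · right; right
        refine ⟨by rw [← hlog]; exact log_xor_cross hxlt hyge (hQlt y hy), ⟨x, hmemQ0 x hx hxlt⟩,
          ⟨y, hmemQ1 y hy hyge⟩⟩
      · right; right
        refine ⟨by rw [← hlog, Nat.xor_comm]; exact log_xor_cross hylt hxge (hQlt x hx),
          ⟨y, hmemQ0 y hy hylt⟩, ⟨x, hmemQ1 x hx hxge⟩⟩
      · right; left
        have hx1 := hmemQ1 x hx hxge
        have hy1 := hmemQ1 y hy hyge
        have hxb := hQ1mem x hx1
        have hyb := hQ1mem y hy1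
        have hxor : x ^^^ y = (x - 2 ^ m) ^^^ (y - 2 ^ m) := by
          conv_lhs => rw [show x = 2 ^ m + (x - 2 ^ m) by omega,
            show y = 2 ^ m + (y - 2 ^ m) by omega]
          exact xor_shift (by omega) (by omega)
        have hab : x - 2 ^ m ≠ y - 2 ^ m := by omega
        rw [hF1, Finset.mem_filter, Finset.mem_range]
        refine ⟨?_, x - 2 ^ m, ?_, y - 2 ^ m, ?_, hab, by rw [← hxor]; exact hlog⟩
        · rw [← hlog, hxor]
          exact log_xor_lt hab (by omega) (by omega)
        · rw [hQ1'def, Finset.mem_image]; exact ⟨x, hx1, rfl⟩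
        · rw [hQ1'def, Finset.mem_image]; exact ⟨y, hy1, rfl⟩
    by_cases h1 : Q1.Nonempty
    · by_cases h0 : Q0.Nonempty
      · have hsub : F ⊆ F0 ∪ F1 ∪ {m} := by
          intro i hi
          rcases key i hi with h | h | h
          · exact Finset.mem_union_left _ (Finset.mem_union_left _ h)
          · exact Finset.mem_union_left _ (Finset.mem_union_right _ h)
          · exact Finset.mem_union_right _ (by simp [h.1])
        have hb : F.card ≤ F0.card + F1.card + 1 := by
          calc F.card ≤ (F0 ∪ F1 ∪ {m}).card := Finset.card_le_card hsub
          _ ≤ (F0 ∪ F1).card + 1 := by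
              simpa using Finset.card_union_le (F0 ∪ F1) {m}
          _ ≤ F0.card + F1.card + 1 := by
              have := Finset.card_union_le F0 F1; omega
        have ih0 : F0.card ≤ Q0.card - 1 := ih Q0 hQ0sub h0
        have ih1 : F1.card ≤ Q1'.card - 1 := ih Q1' hQ1'sub (h1.image _)
        have hc0 : 1 ≤ Q0.card := Finset.card_pos.mpr h0
        have hc1 : 1 ≤ Q1.card := Finset.card_pos.mpr h1
        omega
      · -- Q0 empty: every element of Q is ≥ 2^m, so F ⊆ F1
        have hsub : F ⊆ F1 := by
          intro i hi
          rcases key i hi with h | h | h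
          · rw [hF0, Finset.mem_filter] at h
            obtain ⟨-, x, hx, -⟩ := h
            exact absurd ⟨x, hx⟩ h0
          · exact h
          · exact absurd h.2.1 h0
        have ih1 : F1.card ≤ Q1'.card - 1 := ih Q1' hQ1'sub (h1.image _)
        have := Finset.card_le_card hsub
        omega
    · -- Q1 empty
      have h0 : Q0.Nonempty := by
        obtain ⟨x, hx⟩ := hne
        rcases lt_or_ge x (2 ^ m) with h | h
        · exact ⟨x, hmemQ0 x hx h⟩
        · exact absurd ⟨x, hmemQ1 x hx h⟩ h1
      have hsub : F ⊆ F0 := by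
        intro i hi
        rcases key i hi with h | h | h
        · exact h
        · rw [hF1, Finset.mem_filter] at h
          obtain ⟨-, x, hx, -⟩ := h
          rw [hQ1'def, Finset.mem_image] at hx
          obtain ⟨y, hy, -⟩ := hx
          exact absurd ⟨y, hy⟩ h1
        · exact absurd h.2.2 h1
      have ih0 : F0.card ≤ Q0.card - 1 := ih Q0 hQ0sub h0
      have := Finset.card_le_card hsub
      omega

/-- A set `Q ⊆ [2^m]` captures at most `|Q| - 1` binary profiles, where the profile of a
pair `x ≠ y` is the index of the most significant bit in which they differ. -/
theorem stmt3 (m : ℕ) (Q : Finset ℕ) (hQ : Q ⊆ Finset.range (2 ^ m)) (hne : Q.Nonempty) :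
    ((Finset.range m).filter (fun i =>
        ∃ x ∈ Q, ∃ y ∈ Q, x ≠ y ∧ Nat.log 2 (x ^^^ y) = i)).card ≤ Q.card - 1 :=
  aux_stmt3 m Q hQ hne
end

section
/- For n a power of 2 and i ∈ [log₂ n], define f_i : [n] → [n] by f_i(x) = f^↓(F_i(x)), where f^↓ is the decreasing permutation and F_i flips bit i. Then a pair x < y forms an increasing pair f_i(x) < f_i(y) if and only if the most significant bit in which x and y differ is exactly i. -/
lemma aux_testBit_log {d : ℕ} (hd : d ≠ 0) : d.testBit (Nat.log 2 d) = true := by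
  set k := Nat.log 2 d with hk
  have h1 : 2 ^ k ≤ d := Nat.pow_log_le_self 2 hd
  have h2 : d < 2 ^ (k + 1) := Nat.lt_pow_succ_log_self (by norm_num) d
  have hdiv : d / 2 ^ k = 1 := by
    rw [pow_succ] at h2
    exact Nat.div_eq_of_lt_le (by omega) (by omega)
  simp [Nat.testBit_eq_decide_div_mod_eq, hdiv]

lemma aux_testBit_gt {d j : ℕ} (hj : Nat.log 2 d < j) : d.testBit j = false := by
  apply Nat.testBit_lt_two_pow
  calc d < 2 ^ (Nat.log 2 d + 1) := Nat.lt_pow_succ_log_self (by norm_num) d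
    _ ≤ 2 ^ j := Nat.pow_le_pow_right (by norm_num) hj

lemma aux_lt_iff {a b : ℕ} (h : a ≠ b) :
    a < b ↔ a.testBit (Nat.log 2 (a ^^^ b)) = false := by
  set d := a ^^^ b with hdd
  have hd : d ≠ 0 := by simpa [hdd, xor_eq_zero_iff] using h
  set k := Nat.log 2 d with hk
  have hdk : d.testBit k = true := aux_testBit_log hd
  have hne : a.testBit k ≠ b.testBit k := by
    rw [hdd, Nat.testBit_xor] at hdk
    intro hcon
    rw [hcon] at hdk
    simp at hdk
  have heq : ∀ j, k < j → a.testBit j = b.testBit j := by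
    intro j hj
    have h3 := aux_testBit_gt (d := d) (hk ▸ hj)
    rw [hdd, Nat.testBit_xor] at h3
    cases ha : a.testBit j <;> cases hb : b.testBit j <;> simp_all
  constructor
  · intro hab
    by_contra hcon
    have ha : a.testBit k = true := by simpa using hcon
    have hb : b.testBit k = false := by
      cases hbk : b.testBit k
      · rfl
      · exact absurd (ha.trans hbk.symm) hne
    have : b < a := Nat.lt_of_testBit k hb ha fun j hj => (heq j hj).symm
    omega
  · intro ha
    have hb : b.testBit k = true := by
      cases hbk : b.testBit k
      · exact absurd (ha.trans hbk.symm) hne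
      · rfl
    exact Nat.lt_of_testBit k ha hb heq

/-- For `f_i = f^↓ ∘ F_i` (with `F_i` flipping bit `i` and `f^↓` the decreasing permutation
on `{0,…,2^m-1}`), a pair `x < y` is increasing for `f_i` iff the most significant bit in
which `x` and `y` differ is exactly `i`. -/
theorem stmt4 (m i x y : ℕ) (hi : i < m) (hx : x < 2 ^ m) (hy : y < 2 ^ m) (hxy : x < y) :
    2 ^ m - 1 - (x ^^^ 2 ^ i) < 2 ^ m - 1 - (y ^^^ 2 ^ i) ↔ Nat.log 2 (x ^^^ y) = i := by
  have h2i : (2 : ℕ) ^ i < 2 ^ m := Nat.pow_lt_pow_right (by norm_num) hi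
  have hxi : x ^^^ 2 ^ i < 2 ^ m := Nat.xor_lt_two_pow hx h2i
  have hyi : y ^^^ 2 ^ i < 2 ^ m := Nat.xor_lt_two_pow hy h2i
  have hm : (1 : ℕ) ≤ 2 ^ m := Nat.one_le_two_pow
  have step1 : (2 ^ m - 1 - (x ^^^ 2 ^ i) < 2 ^ m - 1 - (y ^^^ 2 ^ i)) ↔
      y ^^^ 2 ^ i < x ^^^ 2 ^ i := by omega
  rw [step1]
  set k := Nat.log 2 (x ^^^ y) with hk
  have hne : (y ^^^ 2 ^ i) ≠ (x ^^^ 2 ^ i) := by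
    intro h
    have : y = x := by
      have := congrArg (· ^^^ 2 ^ i) h
      simpa [Nat.xor_assoc] using this
    omega
  have hxorxor : (y ^^^ 2 ^ i) ^^^ (x ^^^ 2 ^ i) = x ^^^ y := by
    rw [Nat.xor_comm x y]
    rw [Nat.xor_assoc, Nat.xor_comm (2 ^ i), Nat.xor_assoc, Nat.xor_self, Nat.xor_zero]
  rw [aux_lt_iff hne, hxorxor, ← hk]
  -- x.testBit k = false since x < y
  have hx_false : x.testBit k = false := (aux_lt_iff (by omega : x ≠ y)).mp hxy
  have hd : x ^^^ y ≠ 0 := by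
    simp only [ne_eq, xor_eq_zero_iff]; omega
  have hdk : (x ^^^ y).testBit k = true := aux_testBit_log hd
  have hy_true : y.testBit k = true := by
    rw [Nat.testBit_xor, hx_false] at hdk
    simpa using hdk
  rw [Nat.testBit_xor, hy_true, Nat.testBit_two_pow]
  constructor
  · intro h
    by_contra hik
    simp [show ¬ i = k from fun h' => hik h'.symm] at h
  · intro h
    simp [h.symm]
end

section
/- For n a power of 2 and i ∈ [log₂ n], the sequence f_i = f^↓ ∘ F_i contains n/2 pairwise disjoint increasing pairs, namely the pairs (x, F_i(x)) over all x whose i-th bit is 0. -/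
open scoped Classical

lemma aux_lt {x i : ℕ} (h : x.testBit i = false) : x < x ^^^ 2 ^ i := by
  apply Nat.lt_of_testBit i
  · simp [Nat.testBit_xor, h]
  · simp [Nat.testBit_xor, h]
  · intro j hj
    simp [Nat.testBit_xor, Nat.testBit_two_pow, Nat.ne_of_lt hj]

lemma aux_bit {x i : ℕ} : (x ^^^ 2 ^ i).testBit i = !x.testBit i := by
  simp [Nat.testBit_xor, Bool.xor_comm]

/-- The sequence `f_i = f^↓ ∘ F_i` contains `2^m/2` pairwise disjoint increasing pairs,
namely the pairs `(x, F_i x)` over all `x` whose `i`-th bit is `0`. -/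
theorem stmt5 (m i : ℕ) (hi : i < m)
    (P : Finset ℕ)
    (hP : P = (Finset.range (2 ^ m)).filter (fun x => x.testBit i = false)) :
    P.card = 2 ^ m / 2 ∧
    (∀ x ∈ P, x < x ^^^ 2 ^ i ∧
      2 ^ m - 1 - (x ^^^ 2 ^ i) < 2 ^ m - 1 - ((x ^^^ 2 ^ i) ^^^ 2 ^ i)) ∧
    (∀ x ∈ P, ∀ y ∈ P, x ≠ y →
      Disjoint ({x, x ^^^ 2 ^ i} : Finset ℕ) ({y, y ^^^ 2 ^ i} : Finset ℕ)) := by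
  have hpow : (2:ℕ) ^ i < 2 ^ m := Nat.pow_lt_pow_right (by norm_num) hi
  have hmemP : ∀ x, x ∈ P ↔ x < 2 ^ m ∧ x.testBit i = false := by
    intro x; simp [hP, Finset.mem_filter, Finset.mem_range]
  have hxor_lt : ∀ x, x < 2 ^ m → x ^^^ 2 ^ i < 2 ^ m := fun x hx =>
    Nat.xor_lt_two_pow hx hpow
  refine ⟨?_, ?_, ?_⟩
  · -- cardinality
    set Q := (Finset.range (2 ^ m)).filter (fun x => x.testBit i = true) with hQ
    have hcardeq : P.card = Q.card := by
      apply Finset.card_bij (fun x _ => x ^^^ 2 ^ i)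
      · intro a ha
        rw [hmemP] at ha
        simp [hQ, Finset.mem_filter, Finset.mem_range, hxor_lt a ha.1, aux_bit, ha.2]
      · intro a ha b hb h
        have := congrArg (· ^^^ 2 ^ i) h
        simpa using this
      · intro b hb
        simp only [hQ, Finset.mem_filter, Finset.mem_range] at hb
        exact ⟨b ^^^ 2 ^ i, by rw [hmemP]; simp [hxor_lt b hb.1, aux_bit, hb.2], Nat.xor_xor_cancel_right _ _⟩
    have hdisj : Disjoint P Q := by
      rw [Finset.disjoint_left]
      intro a ha hq
      rw [hmemP] at ha
      simp only [hQ, Finset.mem_filter] at hq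
      simp [ha.2] at hq
    have hunion : P ∪ Q = Finset.range (2 ^ m) := by
      rw [hP, hQ]
      ext x
      simp only [Finset.mem_union, Finset.mem_filter, Finset.mem_range]
      rcases Bool.eq_false_or_eq_true (x.testBit i) with h | h <;> simp [h]
    have : P.card + Q.card = 2 ^ m := by
      rw [← Finset.card_union_of_disjoint hdisj, hunion, Finset.card_range]
    omega
  · intro x hx
    rw [hmemP] at hx
    have h1 := aux_lt hx.2
    have h2 := hxor_lt x hx.1
    constructor
    · exact h1
    · rw [Nat.xor_xor_cancel_right]
      omega
  · intro x hx y hy hxy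
    rw [hmemP] at hx hy
    have hx2 := hx.2; have hy2 := hy.2
    rw [Finset.disjoint_left]
    intro a ha hb
    simp only [Finset.mem_insert, Finset.mem_singleton] at ha hb
    have hxorinj : x ^^^ 2 ^ i = y ^^^ 2 ^ i → x = y := by
      intro h
      have := congrArg (· ^^^ 2 ^ i) h
      simpa using this
    rcases ha with rfl | rfl <;> rcases hb with h | h
    · exact hxy h
    · rw [h] at hx2; rw [aux_bit, hy2] at hx2; simp at hx2
    · rw [← h] at hy2; rw [aux_bit, hx2] at hy2; simp at hy2
    · exact hxy (hxorinj h)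
end

section
/- Let i₁ < i₂ < … < i_h ∈ [m], n = 2^m, and define f = f^↓ ∘ F_{i_h} ∘ … ∘ F_{i_1} on {0,…,n−1}. Then for x < y, f(x) < f(y) if and only if M(x,y) ∈ {i₁,…,i_h}. -/
/-!
The flips `F_{i_1}, …, F_{i_h}` together are XOR with one mask `s` whose set bits are exactly the
(distinct) indices `i_j`, and `n - 1 - ·` reverses the order on `[0, n)`. Comparing `x < y` is decided at the most significant differing bit
`k = log₂ (x ^^^ y)`, where `x` has a `0` and `y` a `1`; XOR with `s` keeps `k` as the most
significant differing bit and swaps the two bits exactly when bit `k` of `s` is set, i.e. when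
`k` is one of the flipped indices.
-/

namespace Nat

theorem testBit_log_two_self {n : ℕ} (hn : n ≠ 0) : n.testBit (log 2 n) = true :=
  log2_eq_log_two ▸ testBit_log2 hn

theorem testBit_eq_false_of_log_two_lt {n i : ℕ} (hi : log 2 n < i) : n.testBit i = false :=
  testBit_lt_two_pow <| (lt_pow_succ_log_self one_lt_two n).trans_le <|
    pow_le_pow_right₀ one_le_two hi

theorem lt_iff_testBit_log_two_xor {a b : ℕ} (hab : a ≠ b) :
    a < b ↔ b.testBit (log 2 (a ^^^ b)) = true := by
  set k := log 2 (a ^^^ b)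
  have hk : (a.testBit k ^^ b.testBit k) = true := by
    rw [← testBit_xor]
    exact testBit_log_two_self (xor_ne_zero_iff.mpr hab)
  have hagree : ∀ j, k < j → a.testBit j = b.testBit j := fun j hj => by
    simpa [testBit_xor] using testBit_eq_false_of_log_two_lt (n := a ^^^ b) hj
  cases hb : b.testBit k
  · have ha : a.testBit k = true := by simpa [hb] using hk
    simpa using (lt_of_testBit k hb ha fun j hj => (hagree j hj).symm).le
  · have ha : a.testBit k = false := by simpa [hb] using hk
    simpa using lt_of_testBit k ha hb hagree

theorem xor_lt_xor_iff_testBit_log_two_xor {a b : ℕ} (s : ℕ) (hab : a < b) :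
    b ^^^ s < a ^^^ s ↔ s.testBit (log 2 (a ^^^ b)) = true := by
  have hne : b ^^^ s ≠ a ^^^ s := fun h => hab.ne' (xor_left_injective h)
  have hxor : (b ^^^ s) ^^^ (a ^^^ s) = a ^^^ b := by
    rw [Nat.xor_comm a s, ← Nat.xor_assoc, xor_xor_cancel_right, Nat.xor_comm]
  have hb := (lt_iff_testBit_log_two_xor hab.ne).mp hab
  have ha : a.testBit (log 2 (a ^^^ b)) = false := by
    simpa [testBit_xor, hb] using testBit_log_two_self (xor_ne_zero_iff.mpr hab.ne)
  rw [lt_iff_testBit_log_two_xor hne, hxor, testBit_xor, ha, Bool.false_xor]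

end Nat

namespace List

theorem foldl_xor_two_pow_eq_xor (l : List ℕ) (x : ℕ) :
    l.foldl (fun a i => a ^^^ 2 ^ i) x = x ^^^ l.foldl (fun a i => a ^^^ 2 ^ i) 0 := by
  induction l generalizing x with
  | nil => simp
  | cons a t ih =>
    rw [foldl_cons, foldl_cons, ih, ih (0 ^^^ 2 ^ a), Nat.zero_xor, Nat.xor_assoc]

theorem testBit_foldl_xor_two_pow_zero {l : List ℕ} (hl : l.Nodup) (k : ℕ) :
    (l.foldl (fun a i => a ^^^ 2 ^ i) 0).testBit k = decide (k ∈ l) := by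
  induction l with
  | nil => simp
  | cons a t ih =>
    obtain ⟨hat, ht⟩ := nodup_cons.mp hl
    rw [foldl_cons, foldl_xor_two_pow_eq_xor, Nat.zero_xor, Nat.testBit_xor,
      Nat.testBit_two_pow, ih ht]
    by_cases hk : k = a
    · subst hk; simp [hat]
    · simp [hk, Ne.symm hk]

end List

/-- For `f = f^↓ ∘ F_{i_h} ∘ … ∘ F_{i_1}` with `i_1 < … < i_h < m`, and `x < y < 2^m`,
`f x < f y` iff the most significant differing bit of `x,y` lies in `{i_1, …, i_h}`. -/
theorem stmt8 (m h : ℕ) (ι : ℕ → ℕ)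
    (hmono : ∀ a b, a < b → b < h → ι a < ι b)
    (hlt : ∀ j < h, ι j < m)
    (x y : ℕ) (hx : x < 2 ^ m) (hy : y < 2 ^ m) (hxy : x < y) :
    (2 ^ m - 1 - ((List.range h).map ι).foldl (fun a i => a ^^^ 2 ^ i) x
      < 2 ^ m - 1 - ((List.range h).map ι).foldl (fun a i => a ^^^ 2 ^ i) y)
    ↔ ∃ j < h, Nat.log 2 (x ^^^ y) = ι j := by
  set l := (List.range h).map ι
  have hl : l.Nodup := by
    refine List.nodup_range.map_on fun a ha b hb hab => ?_
    simp only [List.mem_range] at ha hb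
    by_contra hne
    rcases Nat.lt_or_gt_of_ne hne with h' | h'
    · exact (hmono a b h' hb).ne hab
    · exact (hmono b a h' ha).ne' hab
  set s := l.foldl (fun a i => a ^^^ 2 ^ i) 0
  have hs : s < 2 ^ m := Nat.lt_pow_two_of_testBit s fun k hk => by
    simpa [s, List.testBit_foldl_xor_two_pow_zero hl, l] using
      fun j hj => (hlt j hj).trans_le hk |>.ne
  have hxs := Nat.xor_lt_two_pow hx hs
  have hys := Nat.xor_lt_two_pow hy hs
  rw [List.foldl_xor_two_pow_eq_xor l x, List.foldl_xor_two_pow_eq_xor l y,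
    show 2 ^ m - 1 - (x ^^^ s) < 2 ^ m - 1 - (y ^^^ s) ↔ y ^^^ s < x ^^^ s by omega,
    Nat.xor_lt_xor_iff_testBit_log_two_xor s hxy, List.testBit_foldl_xor_two_pow_zero hl]
  simp [l, eq_comm]
end

section
/- Let n = 2^m, k = 2^h with h ≤ m, and i₁ < … < i_h ∈ [m]. The function f = f^↓ ∘ F_{i_h} ∘ … ∘ F_{i_1} contains no increasing subsequence of length k+1. -/
/-!
Write `c` for the mask `∑ 2 ^ i_j`, so that `f x = n - 1 - (x ^^^ c)` and an increasing subsequence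
of `f` is a chain `x₁ < ⋯ < x_ℓ` along which `x ↦ x ^^^ c` decreases. For `x < y` the xor with `c`
reverses the order exactly when `c` has a bit at the most significant position where `x` and `y`
differ, and then `x &&& c < y &&& c`. So `x ↦ x &&& c` is strictly increasing on the chain, while it
takes at most `2 ^ h` values, one for each set of bits of `c`.
-/

namespace Nat

theorem foldl_xor_two_pow (L : List ℕ) (x : ℕ) :
    L.foldl (fun a i => a ^^^ 2 ^ i) x = x ^^^ L.foldl (fun a i => a ^^^ 2 ^ i) 0 := by
  induction L generalizing x with
  | nil => simp
  | cons i L ih =>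
    simp only [List.foldl_cons]
    rw [ih (x ^^^ 2 ^ i), ih (0 ^^^ 2 ^ i)]
    simp [Nat.xor_assoc]

theorem testBit_foldl_xor_two_pow {L : List ℕ} {x b : ℕ}
    (hb : (L.foldl (fun a i => a ^^^ 2 ^ i) x).testBit b = true) :
    x.testBit b = true ∨ b ∈ L := by
  induction L generalizing x with
  | nil => exact Or.inl hb
  | cons i L ih =>
    rcases ih hb with hxb | hbL
    · rw [testBit_xor, testBit_two_pow] at hxb
      by_cases hib : i = b
      · exact Or.inr (hib ▸ List.mem_cons_self)
      · exact Or.inl (by simpa [hib] using hxb)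
    · exact Or.inr (List.mem_cons_of_mem i hbL)

theorem exists_testBit_of_lt {x y : ℕ} (hxy : x < y) :
    ∃ i, x.testBit i = false ∧ y.testBit i = true ∧ ∀ j, i < j → x.testBit j = y.testBit j := by
  obtain ⟨i, hi, hhigh⟩ := exists_most_significant_bit (n := x ^^^ y) fun h0 =>
    hxy.ne (eq_of_xor_eq_zero h0)
  have hagree : ∀ j, i < j → x.testBit j = y.testBit j := fun j hj => by
    simpa [testBit_xor] using hhigh j hj
  rw [testBit_xor] at hi
  cases hx : x.testBit i <;> cases hy : y.testBit i <;> simp [hx, hy] at hi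
  case false.true => exact ⟨i, hx, hy, hagree⟩
  case true.false => exact absurd (lt_of_testBit i hy hx fun j hj => (hagree j hj).symm) hxy.not_gt

theorem land_lt_land_of_lt_of_xor_lt {x y c : ℕ} (hxy : x < y) (hc : y ^^^ c < x ^^^ c) :
    x &&& c < y &&& c := by
  obtain ⟨i, hx, hy, hagree⟩ := exists_testBit_of_lt hxy
  have hci : c.testBit i = true := by
    by_contra hci
    rw [Bool.not_eq_true] at hci
    exact hc.not_gt (lt_of_testBit i (by simp [hx, hci]) (by simp [hy, hci])
      fun j hj => by simp [hagree j hj])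
  exact lt_of_testBit i (by simp [hx]) (by simp [hy, hci]) fun j hj => by simp [hagree j hj]

theorem le_two_pow_card_of_strictMono_of_strictAnti_xor {k c : ℕ} {S : Finset ℕ}
    (hcS : ∀ i, c.testBit i = true → i ∈ S) {s : Fin k → ℕ}
    (hs : StrictMono s) (hsc : StrictAnti fun j => s j ^^^ c) :
    k ≤ 2 ^ S.card := by
  have hmask : StrictMono fun j => s j &&& c := fun a b hab =>
    land_lt_land_of_lt_of_xor_lt (hs hab) (hsc hab)
  let bits : Fin k → S.powerset := fun j =>
    ⟨(s j &&& c).bitIndices.toFinset, by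
      simpa [Finset.subset_iff, testBit_land] using fun i _ hi => hcS i hi⟩
  have hbits : Function.Injective bits := fun a b hab => by
    apply hmask.injective
    show s a &&& c = s b &&& c
    rw [← Finset.sum_toFinset_bitIndices_two_pow (s a &&& c),
      ← Finset.sum_toFinset_bitIndices_two_pow (s b &&& c)]
    exact congrArg (fun t : Finset ℕ => ∑ i ∈ t, 2 ^ i) (Subtype.ext_iff.mp hab)
  simpa using Fintype.card_le_of_injective bits hbits

end Nat

theorem stmt9_general (m h : ℕ) (ι : ℕ → ℕ)
    (hlt : ∀ j < h, ι j < m) :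
    ¬ ∃ s : Fin (2 ^ h + 1) → ℕ,
      (∀ j, s j < 2 ^ m) ∧ StrictMono s ∧
      StrictMono (fun j =>
        2 ^ m - 1 - ((List.range h).map ι).foldl (fun a i => a ^^^ 2 ^ i) (s j)) := by
  rintro ⟨s, hbound, hs, hf⟩
  set L := (List.range h).map ι
  set c := L.foldl (fun a i => a ^^^ 2 ^ i) 0 with hcdef
  have hcL : ∀ i, c.testBit i = true → i ∈ L.toFinset := fun i hi => by
    simpa using (Nat.testBit_foldl_xor_two_pow hi).resolve_left (by simp)
  have hc : c < 2 ^ m := Nat.lt_pow_two_of_testBit c fun i hi => by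
    by_contra hci
    obtain ⟨j, hj, rfl⟩ : ∃ j < h, ι j = i := by simpa [L] using hcL i (by simpa using hci)
    exact absurd (hlt j hj) (by omega)
  have hflip : StrictAnti fun j => s j ^^^ c := fun a b hab => by
    show s b ^^^ c < s a ^^^ c
    have hfab := hf hab
    have ha := Nat.xor_lt_two_pow (hbound a) hc
    have hb := Nat.xor_lt_two_pow (hbound b) hc
    simp only [Nat.foldl_xor_two_pow L (s _), ← hcdef] at hfab
    omega
  have hchain := Nat.le_two_pow_card_of_strictMono_of_strictAnti_xor hcL hs hflip
  have hcard : 2 ^ L.toFinset.card ≤ 2 ^ h :=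
    Nat.pow_le_pow_right two_pos ((List.toFinset_card_le L).trans_eq (by simp [L]))
  omega

/-- The function `f = f^↓ ∘ F_{i_h} ∘ … ∘ F_{i_1}` on `{0,…,2^m-1}` contains no increasing
subsequence of length `2^h + 1`. -/
theorem stmt9 (m h : ℕ) (hh : h ≤ m) (ι : ℕ → ℕ)
    (hmono : ∀ a b, a < b → b < h → ι a < ι b)
    (hlt : ∀ j < h, ι j < m) :
    ¬ ∃ s : Fin (2 ^ h + 1) → ℕ,
      (∀ j, s j < 2 ^ m) ∧ StrictMono s ∧
      StrictMono (fun j =>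
        2 ^ m - 1 - ((List.range h).map ι).foldl (fun a i => a ^^^ 2 ^ i) (s j)) :=
  stmt9_general m h ι hlt
end

section
/- Let n = 2^m, k = 2^h with h ≤ m, and fix i₁ < … < i_h ∈ [m]. Call x, y ∈ {0,…,n−1} equivalent if their binary representations agree on all bits outside {i₁,…,i_h}. This equivalence relation has exactly n/k classes, each of size k, and the elements x₁ < … < x_k of each class form an increasing subsequence of length k in f = f^↓ ∘ F_{i_h} ∘ … ∘ F_{i_1}. Consequently f contains n/k pairwise disjoint increasing subsequences of length k. -/
open scoped Classical

namespace Stmt11Aux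

/-- If two naturals have disjoint bits, xor equals addition. -/
lemma xor_eq_add : ∀ x, ∀ y : ℕ, x &&& y = 0 → x ^^^ y = x + y := by
  intro x
  induction x using Nat.strong_induction_on with
  | _ x ih =>
    intro y hd
    rcases Nat.eq_zero_or_pos x with hx | hx
    · simp [hx]
    · have h2 : (x / 2) &&& (y / 2) = 0 := by
        rw [← Nat.and_div_two, hd]
      have ih2 := ih (x / 2) (Nat.div_lt_self hx (by norm_num)) (y / 2) h2
      have hm : ¬(x % 2 = 1 ∧ y % 2 = 1) := by
        rintro ⟨h1, h2'⟩
        have := Nat.and_mod_two_eq_one.mpr ⟨h1, h2'⟩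
        omega
      have e1 : (x ^^^ y) % 2 = x % 2 + y % 2 := by
        rcases Nat.mod_two_eq_zero_or_one x with hx2 | hx2 <;>
          rcases Nat.mod_two_eq_zero_or_one y with hy2 | hy2 <;>
          · have := @Nat.xor_mod_two_eq_one x y
            omega
      have e2 : (x ^^^ y) / 2 = x / 2 + y / 2 := by
        rw [Nat.xor_div_two, ih2]
      omega

/-- placement of bits `c j` at positions `g j`, `j < k`. -/
def pl (g : ℕ → ℕ) (c : ℕ → Bool) (k : ℕ) : ℕ :=
  ∑ j ∈ Finset.range k, (c j).toNat * 2 ^ (g j)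

lemma pl_lt (g : ℕ → ℕ) (c : ℕ → Bool) :
    ∀ k w, (∀ a b, a < b → b < k → g a < g b) → (∀ j < k, g j < w) →
      pl g c k < 2 ^ w := by
  intro k
  induction k with
  | zero => intro w _ _; simpa [pl] using Nat.pos_pow_of_pos w (by norm_num)
  | succ k ih =>
    intro w hmono hw
    have h1 : pl g c k < 2 ^ (g k) :=
      ih (g k) (fun a b hab hbk => hmono a b hab (by omega))
        (fun j hj => hmono j k hj (by omega))
    have h2 : 2 ^ (g k + 1) ≤ 2 ^ w := Nat.pow_le_pow_right (by norm_num) (hw k (by omega))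
    have h3 : pl g c (k + 1) = pl g c k + (c k).toNat * 2 ^ (g k) := by
      simp [pl, Finset.sum_range_succ]
    have h4 : (c k).toNat * 2 ^ (g k) ≤ 2 ^ (g k) := by
      cases c k <;> simp
    have h5 : (2:ℕ) ^ (g k + 1) = 2 * 2 ^ (g k) := by ring
    omega


lemma pl_succ (g : ℕ → ℕ) (c : ℕ → Bool) (k : ℕ) :
    pl g c (k + 1) = pl g c k + (c k).toNat * 2 ^ (g k) := by
  simp [pl, Finset.sum_range_succ]

lemma pl_testBit (g : ℕ → ℕ) (c : ℕ → Bool) :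
    ∀ k, (∀ a b, a < b → b < k → g a < g b) → ∀ b,
      ((pl g c k).testBit b = true ↔ ∃ j, j < k ∧ g j = b ∧ c j = true) := by
  intro k
  induction k with
  | zero => intro _ b; simp [pl]
  | succ k ih =>
    intro hmono b
    have hmono' : ∀ a b, a < b → b < k → g a < g b := fun a b hab hbk =>
      hmono a b hab (by omega)
    have hplt : pl g c k < 2 ^ (g k) :=
      pl_lt g c k (g k) hmono' (fun j hj => hmono j k hj (by omega))
    have ihb := ih hmono'
    rw [pl_succ]
    cases hck : c k with
    | false =>
      simp only [hck, Bool.toNat_false, Nat.zero_mul, Nat.add_zero]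
      rw [ihb b]
      constructor
      · rintro ⟨j, hj, hgj, hcj⟩; exact ⟨j, by omega, hgj, hcj⟩
      · rintro ⟨j, hj, hgj, hcj⟩
        refine ⟨j, ?_, hgj, hcj⟩
        rcases Nat.lt_succ_iff_lt_or_eq.mp hj with h' | h'
        · exact h'
        · rw [h'] at hcj; rw [hck] at hcj; exact absurd hcj (by simp)
    | true =>
      simp only [hck, Bool.toNat_true, Nat.one_mul]
      have hdisj : pl g c k &&& 2 ^ (g k) = 0 := by
        rw [Nat.and_two_pow, Nat.testBit_lt_two_pow hplt]
        simp
      rw [← xor_eq_add _ _ hdisj]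
      rw [Nat.testBit_xor]
      by_cases hb : g k = b
      · subst hb
        rw [Nat.testBit_lt_two_pow hplt, Nat.testBit_two_pow_self]
        simp only [Bool.false_xor]
        constructor
        · intro _; exact ⟨k, by omega, rfl, hck⟩
        · intro _; trivial
      · rw [Nat.testBit_two_pow_of_ne hb]
        simp only [Bool.xor_false]
        rw [ihb b]
        constructor
        · rintro ⟨j, hj, hgj, hcj⟩; exact ⟨j, by omega, hgj, hcj⟩
        · rintro ⟨j, hj, hgj, hcj⟩
          refine ⟨j, ?_, hgj, hcj⟩
          rcases Nat.lt_succ_iff_lt_or_eq.mp hj with h' | h'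
          · exact h'
          · subst h'; exact absurd hgj hb

lemma pl_congr (g : ℕ → ℕ) (c c' : ℕ → Bool) (k : ℕ)
    (hc : ∀ j < k, c j = c' j) : pl g c k = pl g c' k := by
  unfold pl
  exact Finset.sum_congr rfl (fun j hj => by rw [hc j (Finset.mem_range.mp hj)])

lemma pl_strictMono (g : ℕ → ℕ) :
    ∀ k, (∀ a b, a < b → b < k → g a < g b) → ∀ t t', t < t' → t' < 2 ^ k →
      pl g t.testBit k < pl g t'.testBit k := by
  intro k
  induction k with
  | zero => intro _ t t' htt h1; omega
  | succ k ih =>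
    intro hmono t t' htt ht'
    have hmono' : ∀ a b, a < b → b < k → g a < g b := fun a b hab hbk =>
      hmono a b hab (by omega)
    have hps : (2:ℕ) ^ (k+1) = 2 ^ k + 2 ^ k := by rw [Nat.pow_succ]; ring
    have hp : 0 < 2 ^ k := Nat.pow_pos (n := k) (by norm_num)
    have hbit : ∀ z : ℕ, z < 2 ^ (k+1) → z.testBit k = decide (2 ^ k ≤ z) := by
      intro z hz
      rw [Nat.testBit_eq_decide_div_mod_eq]
      rcases Nat.lt_or_ge z (2 ^ k) with hc | hc
      · rw [Nat.div_eq_of_lt hc, decide_eq_false (by omega : ¬ (2:ℕ) ^ k ≤ z)]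
        simp
      · have hd : z / 2 ^ k = 1 := by
          have h2 : z / 2 ^ k < 2 := Nat.div_lt_of_lt_mul (by omega)
          have h3 : 1 ≤ z / 2 ^ k := (Nat.one_le_div_iff hp).mpr hc
          omega
        rw [hd, decide_eq_true hc]
        simp
    have modeq : ∀ z, 2 ^ k ≤ z → z < 2 ^ (k+1) → z % 2 ^ k = z - 2 ^ k := by
      intro z hz1 hz2
      rw [Nat.mod_eq_sub_mod hz1, Nat.mod_eq_of_lt (by omega)]
    have hmodbit : ∀ z : ℕ, pl g (z % 2 ^ k).testBit k = pl g z.testBit k := by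
      intro z
      apply pl_congr
      intro j hj
      rw [Nat.testBit_mod_two_pow]
      simp [hj]
    have ht : t < 2 ^ (k+1) := by omega
    rw [pl_succ, pl_succ]
    rw [hbit t ht, hbit t' ht']
    by_cases h1 : 2 ^ k ≤ t
    · -- then 2^k ≤ t' as well
      have h2 : 2 ^ k ≤ t' := by omega
      rw [decide_eq_true h1, decide_eq_true h2]
      simp only [Bool.toNat_true]
      have hmm : t % 2 ^ k < t' % 2 ^ k := by
        rw [modeq t h1 ht, modeq t' h2 ht']; omega
      have := ih hmono' (t % 2 ^ k) (t' % 2 ^ k) hmm (Nat.mod_lt _ (Nat.pow_pos (n := k) (by norm_num)))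
      rw [hmodbit t, hmodbit t'] at this
      omega
    · by_cases h2 : 2 ^ k ≤ t'
      · rw [decide_eq_false h1, decide_eq_true h2]
        simp only [Bool.toNat_true, Bool.toNat_false]
        have hlt1 : pl g t.testBit k < 2 ^ (g k) :=
          pl_lt g _ k (g k) hmono' (fun j hj => hmono j k hj (by omega))
        omega
      · rw [decide_eq_false h1, decide_eq_false h2]
        simp only [Bool.toNat_false]
        have hmm : t % 2 ^ k < t' % 2 ^ k := by
          rw [Nat.mod_eq_of_lt (by omega), Nat.mod_eq_of_lt (by omega)]; exact htt
        have := ih hmono' (t % 2 ^ k) (t' % 2 ^ k) hmm (Nat.mod_lt _ (Nat.pow_pos (n := k) (by norm_num)))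
        rw [hmodbit t, hmodbit t'] at this
        omega


section Main

variable (m h : ℕ) (ι : ℕ → ℕ)

def spread (t : ℕ) : ℕ := pl ι t.testBit h

def mask : ℕ := pl ι (fun _ => true) h

def base (x : ℕ) : ℕ := pl id (fun b => x.testBit b && !((mask h ι).testBit b)) m

variable (hmono : ∀ a b, a < b → b < h → ι a < ι b) (hlt : ∀ j < h, ι j < m)

include hmono in
lemma mask_testBit (b : ℕ) : (mask h ι).testBit b = true ↔ ∃ j, j < h ∧ ι j = b := by
  rw [mask, pl_testBit ι _ h hmono b]
  simp

include hmono in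
lemma spread_testBit (t b : ℕ) :
    (spread h ι t).testBit b = true ↔ ∃ j, j < h ∧ ι j = b ∧ t.testBit j = true := by
  rw [spread, pl_testBit ι _ h hmono b]

lemma base_testBit (x b : ℕ) :
    (base m h ι x).testBit b = true ↔
      b < m ∧ x.testBit b = true ∧ (mask h ι).testBit b = false := by
  rw [base, pl_testBit id _ m (fun a b hab _ => hab) b]
  constructor
  · rintro ⟨j, hj, rfl, hc⟩
    simp only [Bool.and_eq_true, Bool.not_eq_true'] at hc
    exact ⟨hj, hc.1, hc.2⟩
  · rintro ⟨hb, h1, h2⟩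
    exact ⟨b, hb, rfl, by simp [h1, h2]⟩

include hmono hlt in
lemma spread_lt (t : ℕ) : spread h ι t < 2 ^ m :=
  pl_lt ι _ h m hmono hlt

include hmono hlt in
lemma mask_lt : mask h ι < 2 ^ m :=
  pl_lt ι _ h m hmono hlt

lemma base_lt (x : ℕ) : base m h ι x < 2 ^ m :=
  pl_lt id _ m m (fun a b hab _ => hab) (fun j hj => hj)

include hmono in
lemma spread_sub_mask (t b : ℕ) (hb : (spread h ι t).testBit b = true) :
    (mask h ι).testBit b = true := by
  rw [spread_testBit h ι hmono] at hb
  rw [mask_testBit h ι hmono]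
  obtain ⟨j, hj, hij, _⟩ := hb
  exact ⟨j, hj, hij⟩

include hmono in
lemma base_and_spread (x t : ℕ) : base m h ι x &&& spread h ι t = 0 := by
  apply Nat.eq_of_testBit_eq
  intro b
  simp only [Nat.testBit_and, Nat.zero_testBit]
  cases hs : (spread h ι t).testBit b with
  | false => simp
  | true =>
    have hm := spread_sub_mask h ι hmono t b hs
    cases hbb : (base m h ι x).testBit b with
    | false => simp
    | true =>
      rw [base_testBit] at hbb
      rw [hbb.2.2] at hm
      exact absurd hm (by simp)

include hmono in
lemma base_and_mask (x : ℕ) : base m h ι x &&& mask h ι = 0 := by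
  apply Nat.eq_of_testBit_eq
  intro b
  simp only [Nat.testBit_and, Nat.zero_testBit]
  cases hbb : (base m h ι x).testBit b with
  | false => simp
  | true =>
    rw [base_testBit] at hbb
    simp [hbb.2.2]

include hmono hlt in
lemma cls_image (hh : h ≤ m) (x : ℕ) (hx : x < 2 ^ m) :
    (Finset.range (2 ^ m)).filter
        (fun y => ∀ b < m, (∀ j < h, ι j ≠ b) → x.testBit b = y.testBit b)
      = (Finset.range (2 ^ h)).image (fun t => base m h ι x + spread h ι t) := by
  have hinj : ∀ a b, a < h → b < h → ι a = ι b → a = b := by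
    intro a b ha hb hab
    rcases Nat.lt_trichotomy a b with hc | hc | hc
    · exact absurd hab (Nat.ne_of_lt (hmono a b hc hb))
    · exact hc
    · exact absurd hab.symm (Nat.ne_of_lt (hmono b a hc ha))
  ext y
  simp only [Finset.mem_filter, Finset.mem_range, Finset.mem_image]
  constructor
  · rintro ⟨hy, hR⟩
    set t : ℕ := pl id (fun j => y.testBit (ι j)) h with ht
    have htlt : t < 2 ^ h := pl_lt id _ h h (fun a b hab _ => hab) (fun j hj => hj)
    have htb : ∀ j, j < h → t.testBit j = y.testBit (ι j) := by
      intro j hj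
      cases hyy : y.testBit (ι j) with
      | true =>
        rw [pl_testBit id _ h (fun a b hab _ => hab) j |>.mpr ⟨j, hj, rfl, hyy⟩]
      | false =>
        by_contra hcon
        rw [Bool.not_eq_false] at hcon
        obtain ⟨j', hj', hjj', hcj'⟩ := (pl_testBit id _ h (fun a b hab _ => hab) j).mp hcon
        have hjeq : j' = j := hjj'
        subst hjeq
        rw [hcj'] at hyy
        exact absurd hyy (by simp)
    refine ⟨t, htlt, ?_⟩
    rw [← xor_eq_add _ _ (base_and_spread m h ι hmono x t)]
    apply Nat.eq_of_testBit_eq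
    intro b
    rw [Nat.testBit_xor]
    by_cases hbm : b < m
    · by_cases hmask : (mask h ι).testBit b = true
      · -- mask bit: base bit is false; spread bit = y bit
        have hb0 : (base m h ι x).testBit b = false := by
          cases hbb : (base m h ι x).testBit b with
          | false => rfl
          | true => rw [base_testBit] at hbb; rw [hbb.2.2] at hmask; exact absurd hmask (by simp)
        rw [hb0, Bool.false_xor]
        obtain ⟨j, hj, hij⟩ := (mask_testBit h ι hmono b).mp hmask
        cases hyy : y.testBit b with
        | true =>
          exact (spread_testBit h ι hmono t b).mpr ⟨j, hj, hij, by rw [htb j hj, hij, hyy]⟩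
        | false =>
          cases hss : (spread h ι t).testBit b with
          | false => rfl
          | true =>
            obtain ⟨j', hj', hij', hcj'⟩ := (spread_testBit h ι hmono t b).mp hss
            rw [htb j' hj', hij'] at hcj'
            rw [hcj'] at hyy
            exact absurd hyy (by simp)
      · -- non-mask bit: spread bit false, base bit = x bit = y bit
        have hs0 : (spread h ι t).testBit b = false := by
          cases hss : (spread h ι t).testBit b with
          | false => rfl
          | true => exact absurd (spread_sub_mask h ι hmono t b hss) hmask
        rw [hs0, Bool.xor_false]
        have hnomask : ∀ j < h, ι j ≠ b := by
          intro j hj hij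
          exact hmask ((mask_testBit h ι hmono b).mpr ⟨j, hj, hij⟩)
        have hxy := hR b hbm hnomask
        cases hyy : y.testBit b with
        | true =>
          have hmf : (mask h ι).testBit b = false := by simpa using hmask
          exact (base_testBit m h ι x b).mpr ⟨hbm, by rw [← hxy] at hyy; exact hyy, hmf⟩
        | false =>
          cases hbb : (base m h ι x).testBit b with
          | false => rfl
          | true =>
            rw [base_testBit] at hbb
            rw [hxy] at hbb
            rw [hbb.2.1] at hyy
            exact absurd hyy (by simp)
    · -- b ≥ m : everything false
      have h1 : (base m h ι x).testBit b = false := by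
        cases hbb : (base m h ι x).testBit b with
        | false => rfl
        | true => rw [base_testBit] at hbb; omega
      have h2 : (spread h ι t).testBit b = false := by
        cases hss : (spread h ι t).testBit b with
        | false => rfl
        | true =>
          obtain ⟨j, hj, hij, _⟩ := (spread_testBit h ι hmono t b).mp hss
          have := hlt j hj; omega
      have h3 : y.testBit b = false :=
        Nat.testBit_lt_two_pow (lt_of_lt_of_le hy (Nat.pow_le_pow_right (by norm_num) (by omega)))
      rw [h1, h2, h3]
      rfl
  · rintro ⟨t, htlt, rfl⟩
    rw [← xor_eq_add _ _ (base_and_spread m h ι hmono x t)]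
    have hylt : base m h ι x ^^^ spread h ι t < 2 ^ m :=
      Nat.xor_lt_two_pow (base_lt m h ι x) (spread_lt m h ι hmono hlt t)
    refine ⟨hylt, ?_⟩
    intro b hb hnomask
    have hmaskb : (mask h ι).testBit b = false := by
      cases hmm : (mask h ι).testBit b with
      | false => rfl
      | true =>
        obtain ⟨j, hj, hij⟩ := (mask_testBit h ι hmono b).mp hmm
        exact absurd hij (hnomask j hj)
    have hs0 : (spread h ι t).testBit b = false := by
      cases hss : (spread h ι t).testBit b with
      | false => rfl
      | true => rw [spread_sub_mask h ι hmono t b hss] at hmaskb; exact absurd hmaskb (by simp)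
    rw [Nat.testBit_xor, hs0, Bool.xor_false]
    cases hxx : x.testBit b with
    | true =>
      exact ((base_testBit m h ι x b).mpr ⟨hb, hxx, hmaskb⟩).symm
    | false =>
      cases hbb : (base m h ι x).testBit b with
      | false => rfl
      | true =>
        rw [base_testBit] at hbb
        rw [hbb.2.1] at hxx
        exact absurd hxx (by simp)

end Main

lemma foldl_xor_shift : ∀ (L : List ℕ) (z : ℕ),
    L.foldl (fun a i => a ^^^ 2 ^ i) z = z ^^^ L.foldl (fun a i => a ^^^ 2 ^ i) 0 := by
  intro L
  induction L with
  | nil => intro z; simp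
  | cons i L ih =>
    intro z
    simp only [List.foldl_cons]
    rw [ih (z ^^^ 2 ^ i), ih (0 ^^^ 2 ^ i)]
    rw [Nat.zero_xor, Nat.xor_assoc]

lemma foldl_mask (h : ℕ) (ι : ℕ → ℕ) (hmono : ∀ a b, a < b → b < h → ι a < ι b) :
    ∀ k, k ≤ h → ((List.range k).map ι).foldl (fun a i => a ^^^ 2 ^ i) 0
      = pl ι (fun _ => true) k := by
  intro k
  induction k with
  | zero => intro _; simp [pl]
  | succ k ih =>
    intro hk
    rw [List.range_succ, List.map_append, List.foldl_append, ih (by omega)]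
    simp only [List.map_cons, List.map_nil, List.foldl_cons, List.foldl_nil]
    have hplt : pl ι (fun _ => true) k < 2 ^ (ι k) :=
      pl_lt ι _ k (ι k) (fun a b hab hbk => hmono a b hab (by omega))
        (fun j hj => hmono j k hj (by omega))
    have hdisj : pl ι (fun _ => true) k &&& 2 ^ (ι k) = 0 := by
      rw [Nat.and_two_pow, Nat.testBit_lt_two_pow hplt]; simp
    rw [xor_eq_add _ _ hdisj, pl_succ]
    simp

lemma mask_sub (h : ℕ) (ι : ℕ → ℕ) (hmono : ∀ a b, a < b → b < h → ι a < ι b) (t : ℕ) :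
    spread h ι t ≤ mask h ι ∧
      mask h ι - spread h ι t = mask h ι ^^^ spread h ι t := by
  have d2 : (mask h ι ^^^ spread h ι t) &&& spread h ι t = 0 := by
    apply Nat.eq_of_testBit_eq
    intro b
    simp only [Nat.testBit_and, Nat.testBit_xor, Nat.zero_testBit]
    cases hs : (spread h ι t).testBit b with
    | false => simp
    | true => rw [spread_sub_mask h ι hmono t b hs]; simp
  have e1 : (mask h ι ^^^ spread h ι t) + spread h ι t = mask h ι := by
    rw [← xor_eq_add _ _ d2, Nat.xor_assoc, Nat.xor_self, Nat.xor_zero]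
  omega

lemma fval (m h : ℕ) (ι : ℕ → ℕ)
    (hmono : ∀ a b, a < b → b < h → ι a < ι b) (hlt : ∀ j < h, ι j < m)
    (x t : ℕ) :
    2 ^ m - 1 - ((base m h ι x + spread h ι t) ^^^ mask h ι)
      = (2 ^ m - 1 - (base m h ι x + mask h ι)) + spread h ι t := by
  obtain ⟨hle, hsub⟩ := mask_sub h ι hmono t
  have d3 : base m h ι x &&& (mask h ι ^^^ spread h ι t) = 0 := by
    apply Nat.eq_of_testBit_eq
    intro b
    simp only [Nat.testBit_and, Nat.testBit_xor, Nat.zero_testBit]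
    have hbm : (base m h ι x &&& mask h ι).testBit b = false := by
      rw [base_and_mask m h ι hmono x]; simp
    rw [Nat.testBit_and] at hbm
    cases hb : (base m h ι x).testBit b with
    | false => simp
    | true =>
      rw [hb] at hbm
      simp only [Bool.true_and] at hbm ⊢
      cases hs : (spread h ι t).testBit b with
      | false => rw [hbm]; simp
      | true => rw [spread_sub_mask h ι hmono t b hs] at hbm; exact absurd hbm (by simp)
  have e2 : (base m h ι x + spread h ι t) ^^^ mask h ι
      = base m h ι x + (mask h ι - spread h ι t) := by
    rw [← xor_eq_add _ _ (base_and_spread m h ι hmono x t), Nat.xor_assoc,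
      Nat.xor_comm (spread h ι t) (mask h ι), ← hsub] at *
    rw [hsub] at d3 ⊢
    exact xor_eq_add _ _ d3
  have hbm : base m h ι x + mask h ι < 2 ^ m := by
    rw [← xor_eq_add _ _ (base_and_mask m h ι hmono x)]
    exact Nat.xor_lt_two_pow (base_lt m h ι x) (mask_lt m h ι hmono hlt)
  rw [e2]
  omega


end Stmt11Aux

open Stmt11Aux in
/-- The relation "agreeing on all bits outside `{i_1,…,i_h}`" partitions `{0,…,2^m-1}` into
`2^m/2^h` classes of size `2^h`, and the elements of each class form an increasing
subsequence of length `2^h` in `f = f^↓ ∘ F_{i_h} ∘ … ∘ F_{i_1}`; hence `f` contains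
`2^m/2^h` pairwise disjoint increasing subsequences of length `2^h`. -/
theorem stmt11 (m h : ℕ) (hh : h ≤ m) (ι : ℕ → ℕ)
    (hmono : ∀ a b, a < b → b < h → ι a < ι b)
    (hlt : ∀ j < h, ι j < m) :
    ∃ C : Finset (Finset ℕ),
      C.card = 2 ^ m / 2 ^ h ∧
      (∀ A ∈ C, A.card = 2 ^ h ∧ A ⊆ Finset.range (2 ^ m) ∧
        (∀ x ∈ A, ∀ y, y < 2 ^ m →
          (y ∈ A ↔ ∀ b < m, (∀ j < h, ι j ≠ b) → x.testBit b = y.testBit b))) ∧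
      (∀ A ∈ C, ∀ B ∈ C, A ≠ B → Disjoint A B) ∧
      (∀ A ∈ C, ∃ s : Fin (2 ^ h) → ℕ, StrictMono s ∧ (∀ j, s j ∈ A) ∧
        StrictMono (fun j =>
          2 ^ m - 1 - ((List.range h).map ι).foldl (fun a i => a ^^^ 2 ^ i) (s j))) := by
  classical
  set Cls : ℕ → Finset ℕ := fun x => (Finset.range (2 ^ m)).filter
      (fun y => ∀ b < m, (∀ j < h, ι j ≠ b) → x.testBit b = y.testBit b) with hClsdef
  have hmemCls : ∀ x y : ℕ, y ∈ Cls x ↔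
      y < 2 ^ m ∧ ∀ b < m, (∀ j < h, ι j ≠ b) → x.testBit b = y.testBit b := by
    intro x y
    simp [hClsdef]
  have hR : ∀ x y : ℕ, (∀ b < m, (∀ j < h, ι j ≠ b) → x.testBit b = y.testBit b) →
      Cls x = Cls y := by
    intro x y hxy
    ext z
    rw [hmemCls, hmemCls]
    constructor
    · rintro ⟨hz, hz2⟩
      exact ⟨hz, fun b hb hn => by rw [← hxy b hb hn]; exact hz2 b hb hn⟩
    · rintro ⟨hz, hz2⟩
      exact ⟨hz, fun b hb hn => by rw [hxy b hb hn]; exact hz2 b hb hn⟩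
  have hself : ∀ x, x < 2 ^ m → x ∈ Cls x := by
    intro x hx
    rw [hmemCls]
    exact ⟨hx, fun _ _ _ => rfl⟩
  have himg : ∀ x, x < 2 ^ m →
      Cls x = (Finset.range (2 ^ h)).image (fun t => base m h ι x + spread h ι t) :=
    fun x hx => cls_image m h ι hmono hlt hh x hx
  have hsmono : ∀ x t t', t < t' → t' < 2 ^ h →
      base m h ι x + spread h ι t < base m h ι x + spread h ι t' := by
    intro x t t' h1 h2
    exact Nat.add_lt_add_left (pl_strictMono ι h hmono t t' h1 h2) _
  have hsub : ∀ A ∈ (Finset.range (2 ^ m)).image Cls, A ⊆ Finset.range (2 ^ m) := by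
    intro A hA
    obtain ⟨x, hx, rfl⟩ := Finset.mem_image.mp hA
    intro z hz
    rw [hmemCls] at hz
    exact Finset.mem_range.mpr hz.1
  have hcardA : ∀ A ∈ (Finset.range (2 ^ m)).image Cls, A.card = 2 ^ h := by
    intro A hA
    obtain ⟨x, hx, rfl⟩ := Finset.mem_image.mp hA
    rw [himg x (Finset.mem_range.mp hx)]
    rw [Finset.card_image_of_injOn, Finset.card_range]
    intro t ht t' ht' hne
    simp only [Finset.coe_range, Set.mem_Iio] at ht ht'
    by_contra hcon
    rcases Nat.lt_trichotomy t t' with hc | hc | hc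
    · exact absurd hne (Nat.ne_of_lt (hsmono x t t' hc ht'))
    · exact hcon hc
    · exact absurd hne.symm (Nat.ne_of_lt (hsmono x t' t hc ht))
  have hdisj : ∀ A ∈ (Finset.range (2 ^ m)).image Cls,
      ∀ B ∈ (Finset.range (2 ^ m)).image Cls, A ≠ B → Disjoint A B := by
    intro A hA B hB hne
    obtain ⟨x, hx, rfl⟩ := Finset.mem_image.mp hA
    obtain ⟨y, hy, rfl⟩ := Finset.mem_image.mp hB
    rw [Finset.disjoint_left]
    intro z hzA hzB
    rw [hmemCls] at hzA hzB
    exact hne ((hR x z hzA.2).trans (hR y z hzB.2).symm)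
  refine ⟨(Finset.range (2 ^ m)).image Cls, ?_, ?_, hdisj, ?_⟩
  · -- cardinality
    have hbi : ((Finset.range (2 ^ m)).image Cls).biUnion id = Finset.range (2 ^ m) := by
      ext z
      simp only [Finset.mem_biUnion, id]
      constructor
      · rintro ⟨A, hA, hz⟩
        exact hsub A hA hz
      · intro hz
        refine ⟨Cls z, Finset.mem_image_of_mem _ hz, hself z (Finset.mem_range.mp hz)⟩
    have h1 : (((Finset.range (2 ^ m)).image Cls).biUnion id).card
        = ∑ A ∈ (Finset.range (2 ^ m)).image Cls, A.card :=
      Finset.card_biUnion hdisj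
    rw [hbi, Finset.card_range] at h1
    have h2 : ∑ A ∈ (Finset.range (2 ^ m)).image Cls, A.card
        = ((Finset.range (2 ^ m)).image Cls).card * 2 ^ h := by
      rw [Finset.sum_congr rfl hcardA, Finset.sum_const, smul_eq_mul]
    rw [h2] at h1
    exact (Nat.div_eq_of_eq_mul_left (Nat.pow_pos (n := h) (by norm_num)) h1).symm
  · -- each class
    intro A hA
    refine ⟨hcardA A hA, hsub A hA, ?_⟩
    intro x hxA y hy
    obtain ⟨x₀, hx₀, rfl⟩ := Finset.mem_image.mp hA
    have hx : Cls x₀ = Cls x := hR x₀ x ((hmemCls x₀ x).mp hxA).2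
    rw [hx, hmemCls]
    exact ⟨fun hz => hz.2, fun hz => ⟨hy, hz⟩⟩
  · -- increasing subsequences
    intro A hA
    obtain ⟨x, hx, rfl⟩ := Finset.mem_image.mp hA
    have hxm : x < 2 ^ m := Finset.mem_range.mp hx
    refine ⟨fun j => base m h ι x + spread h ι j.val, ?_, ?_, ?_⟩
    · intro j j' hjj
      exact hsmono x j.val j'.val hjj j'.isLt
    · intro j
      rw [himg x hxm]
      exact Finset.mem_image.mpr ⟨j.val, Finset.mem_range.mpr j.isLt, rfl⟩
    · have key : ∀ j : Fin (2 ^ h),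
          2 ^ m - 1 - ((List.range h).map ι).foldl (fun a i => a ^^^ 2 ^ i)
              (base m h ι x + spread h ι j.val)
            = (2 ^ m - 1 - (base m h ι x + mask h ι)) + spread h ι j.val := by
        intro j
        rw [foldl_xor_shift, foldl_mask h ι hmono h le_rfl]
        exact fval m h ι hmono hlt x j.val
      intro j j' hjj
      simp only
      rw [key j, key j']
      exact Nat.add_lt_add_left (pl_strictMono ι h hmono j.val j'.val hjj j'.isLt) _
end

section
/- Let n = 2^m, k = 2^h, and i₁ < … < i_h ∈ [m]. A tuple x₁ < … < x_k in {0,…,n−1} is an increasing subsequence of f = f^↓ ∘ F_{i_h} ∘ … ∘ F_{i_1} if and only if for every j ∈ [k−1], M(x_j, x_{j+1}) = i_{M(j−1, j)}, where M(j−1,j) is taken in the binary representation of {0,…,k−1}. -/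
namespace Stmt12Aux

lemma testBit_log_self {n : ℕ} (h : n ≠ 0) : n.testBit (Nat.log 2 n) = true := by
  have h1 : 2 ^ Nat.log 2 n ≤ n := Nat.pow_log_le_self 2 h
  have h2 : n < 2 ^ (Nat.log 2 n + 1) := Nat.lt_pow_succ_log_self one_lt_two n
  have h3 : n / 2 ^ Nat.log 2 n = 1 := by
    apply Nat.div_eq_of_lt_le (by omega)
    rw [pow_succ] at h2; omega
  rw [Nat.testBit_eq_decide_div_mod_eq, h3]
  decide

lemma msb_high {a b j : ℕ} (hj : Nat.log 2 (a ^^^ b) < j) : a.testBit j = b.testBit j := by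
  have hx : a ^^^ b < 2 ^ j :=
    lt_of_lt_of_le (Nat.lt_pow_succ_log_self one_lt_two _) (Nat.pow_le_pow_right (by norm_num) hj)
  have h0 := Nat.testBit_eq_false_of_lt hx
  rw [Nat.testBit_xor] at h0
  cases hA : a.testBit j <;> cases hB : b.testBit j <;> simp_all

lemma msb_bit_true {a b : ℕ} (hab : a < b) :
    a.testBit (Nat.log 2 (a ^^^ b)) = false ∧ b.testBit (Nat.log 2 (a ^^^ b)) = true := by
  have hne : a ^^^ b ≠ 0 := xor_eq_zero_iff.not.mpr hab.ne
  have hd := testBit_log_self hne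
  rw [Nat.testBit_xor] at hd
  cases hA : a.testBit (Nat.log 2 (a ^^^ b)) <;>
    cases hB : b.testBit (Nat.log 2 (a ^^^ b)) <;> simp_all
  -- remaining case: a bit true, b bit false, derive contradiction b < a
  exact absurd (Nat.lt_of_testBit _ hB hA fun j hj => (msb_high hj).symm) (by omega)

lemma xor_cancel_pair (u v w : ℕ) : (u ^^^ w) ^^^ (v ^^^ w) = u ^^^ v := by
  rw [Nat.xor_assoc, Nat.xor_comm v w, xor_cancel_left]

lemma xorS_lt_iff {a b : ℕ} (S : ℕ) (hab : a < b) :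
    b ^^^ S < a ^^^ S ↔ S.testBit (Nat.log 2 (a ^^^ b)) = true := by
  obtain ⟨ha, hb⟩ := msb_bit_true hab
  have e : (b ^^^ S) ^^^ (a ^^^ S) = a ^^^ b := by
    rw [xor_cancel_pair, Nat.xor_comm b a]
  constructor
  · intro hlt
    obtain ⟨h1, h2⟩ := msb_bit_true hlt
    rw [e] at h1 h2
    rw [Nat.testBit_xor, ha] at h2
    simpa using h2
  · intro hS
    apply Nat.lt_of_testBit (Nat.log 2 (a ^^^ b))
    · rw [Nat.testBit_xor, hb, hS]; rfl
    · rw [Nat.testBit_xor, ha, hS]; rfl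
    · intro j hj
      rw [Nat.testBit_xor, Nat.testBit_xor, msb_high hj]

lemma foldl_xor_eq (l : List ℕ) (x : ℕ) :
    l.foldl (fun a i => a ^^^ 2 ^ i) x = x ^^^ l.foldl (fun a i => a ^^^ 2 ^ i) 0 := by
  induction l generalizing x with
  | nil => simp
  | cons i l ih =>
    rw [List.foldl_cons, List.foldl_cons, ih (x ^^^ 2 ^ i), ih (0 ^^^ 2 ^ i)]
    rw [Nat.zero_xor, Nat.xor_assoc]

lemma foldl_lt (l : List ℕ) (m : ℕ) (hl : ∀ i ∈ l, i < m) :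
    l.foldl (fun a i => a ^^^ 2 ^ i) 0 < 2 ^ m := by
  induction l with
  | nil => simpa using Nat.pow_pos (n := m) (by norm_num)
  | cons i l ih =>
    rw [List.foldl_cons, foldl_xor_eq, Nat.zero_xor]
    exact Nat.xor_lt_two_pow (Nat.pow_lt_pow_right one_lt_two (hl i (List.mem_cons_self)))
      (ih fun j hj => hl j (List.mem_cons_of_mem i hj))

lemma foldl_testBit (l : List ℕ) (hl : l.Nodup) (p : ℕ) :
    (l.foldl (fun a i => a ^^^ 2 ^ i) 0).testBit p = decide (p ∈ l) := by
  induction l with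
  | nil => simp
  | cons i l ih =>
    rw [List.foldl_cons, foldl_xor_eq, Nat.zero_xor, Nat.testBit_xor, Nat.testBit_two_pow,
      ih hl.of_cons]
    rcases List.nodup_cons.mp hl with ⟨hni, _⟩
    by_cases hip : i = p
    · subst hip
      simp [hni]
    · simp [hip, Ne.symm hip]

lemma chain_le (x : ℕ → ℕ) (L : ℕ) (hm : ∀ t, t < L → x t < x (t + 1)) :
    ∀ a b, a ≤ b → b ≤ L → x a ≤ x b := by
  intro a b hab hbL
  induction b with
  | zero => have : a = 0 := by omega
            subst this; exact le_refl _
  | succ b ihb =>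
    rcases Nat.lt_or_ge a (b + 1) with h' | h'
    · exact le_trans (ihb (by omega) (by omega)) (le_of_lt (hm b (by omega)))
    · have : a = b + 1 := by omega
      rw [this]

lemma chain_high (p : ℕ) (x : ℕ → ℕ) (L : ℕ)
    (hm : ∀ t, t < L → x t < x (t + 1))
    (hd : ∀ t, t < L → Nat.log 2 (x t ^^^ x (t + 1)) ≤ p) :
    ∀ t, t ≤ L → ∀ j, p < j → (x t).testBit j = (x 0).testBit j := by
  intro t
  induction t with
  | zero => intro _ j _; rfl
  | succ t iht =>
    intro htL j hj
    have h1 : (x t).testBit j = (x (t + 1)).testBit j :=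
      msb_high (lt_of_le_of_lt (hd t (by omega)) hj)
    rw [← h1, iht (by omega) j hj]

lemma unique_max (p : ℕ) (x : ℕ → ℕ) (L : ℕ)
    (hm : ∀ t, t < L → x t < x (t + 1))
    (hd : ∀ t, t < L → Nat.log 2 (x t ^^^ x (t + 1)) ≤ p) :
    ∀ t1 t2, t1 < t2 → t2 < L →
      Nat.log 2 (x t1 ^^^ x (t1 + 1)) = p → Nat.log 2 (x t2 ^^^ x (t2 + 1)) ≠ p := by
  intro t1 t2 h12 h2L hd1 hd2
  obtain ⟨ha1, hb1⟩ := msb_bit_true (hm t1 (by omega))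
  obtain ⟨ha2, hb2⟩ := msb_bit_true (hm t2 h2L)
  rw [hd1] at hb1
  rw [hd2] at ha2
  have hle : x (t1 + 1) ≤ x t2 := chain_le x L hm (t1 + 1) t2 h12 (by omega)
  have hlt : x t2 < x (t1 + 1) := by
    apply Nat.lt_of_testBit p ha2 hb1
    intro j hj
    rw [chain_high p x L hm hd t2 (by omega) j hj, chain_high p x L hm hd (t1 + 1) (by omega) j hj]
  omega

lemma chainC (h : ℕ) : ∀ (ι : ℕ → ℕ), (∀ a b, a < b → b < h → ι a < ι b) →
    ∀ (x : ℕ → ℕ) (L : ℕ), (∀ t, t < L → x t < x (t + 1)) →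
    (∀ t, t < L → ∃ j, j < h ∧ Nat.log 2 (x t ^^^ x (t + 1)) = ι j) → L < 2 ^ h := by
  induction h with
  | zero =>
    intro ι _ x L hm hd
    rcases Nat.eq_zero_or_pos L with rfl | hL
    · simp
    · obtain ⟨j, hj, _⟩ := hd 0 hL
      omega
  | succ h ih =>
    intro ι hι x L hm hd
    have hpos : 0 < (2:ℕ) ^ h := Nat.pow_pos (n := h) (by norm_num)
    have hps : (2:ℕ) ^ (h + 1) = 2 ^ h + 2 ^ h := by rw [pow_succ]; omega
    have hιr : ∀ a b, a < b → b < h → ι a < ι b := fun a b hab hb => hι a b hab (by omega)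
    by_cases hex : ∃ T, T < L ∧ Nat.log 2 (x T ^^^ x (T + 1)) = ι h
    · obtain ⟨T, hT, hdT⟩ := hex
      have hdle : ∀ t, t < L → Nat.log 2 (x t ^^^ x (t + 1)) ≤ ι h := by
        intro t ht
        obtain ⟨j, hj, he⟩ := hd t ht
        rcases Nat.lt_succ_iff_lt_or_eq.mp hj with h' | h'
        · exact le_of_lt (he ▸ hι j h h' (by omega))
        · subst h'; omega
      have huniq := unique_max (ι h) x L hm hdle
      have h1 : T < 2 ^ h := by
        apply ih ι hιr x T (fun t ht => hm t (by omega))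
        intro t ht
        obtain ⟨j, hj, he⟩ := hd t (by omega)
        have hjh : j ≠ h := by
          intro hjeq
          exact huniq t T ht hT (by rw [he, hjeq]) hdT
        exact ⟨j, by omega, he⟩
      have h2 : L - T - 1 < 2 ^ h := by
        apply ih ι hιr (fun s => x (T + 1 + s)) (L - T - 1)
        · intro s hs
          show x (T + 1 + s) < x (T + 1 + s + 1)
          exact hm (T + 1 + s) (by omega)
        · intro s hs
          show ∃ j, j < h ∧ Nat.log 2 (x (T + 1 + s) ^^^ x (T + 1 + s + 1)) = ι j
          obtain ⟨j, hj, he⟩ := hd (T + 1 + s) (by omega)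
          have hjh : j ≠ h := by
            intro hjeq
            exact huniq T (T + 1 + s) (by omega) (by omega) hdT (by rw [he, hjeq])
          exact ⟨j, by omega, he⟩
      omega
    · push_neg at hex
      have : L < 2 ^ h := by
        apply ih ι hιr x L hm
        intro t ht
        obtain ⟨j, hj, he⟩ := hd t ht
        have hjh : j ≠ h := by
          intro hjeq
          exact hex t ht (by rw [he, hjeq])
        exact ⟨j, by omega, he⟩
      omega

lemma two_pow_add_xor {n s s' : ℕ} (hs : s < 2 ^ n) (hs' : s' < 2 ^ n) :
    (2 ^ n + s) ^^^ (2 ^ n + s') = s ^^^ s' := by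
  apply Nat.eq_of_testBit_eq
  intro j
  rw [Nat.testBit_xor, Nat.testBit_xor]
  rcases lt_trichotomy j n with hj | hj | hj
  · rw [Nat.testBit_two_pow_add_gt hj, Nat.testBit_two_pow_add_gt hj]
  · subst hj
    rw [Nat.testBit_two_pow_add_eq, Nat.testBit_two_pow_add_eq]
    cases hA : s.testBit j <;> cases hB : s'.testBit j <;> rfl
  · have hb : ∀ u : ℕ, u < 2 ^ n → (2 ^ n + u).testBit j = false := by
      intro u hu
      apply Nat.testBit_eq_false_of_lt
      calc 2 ^ n + u < 2 ^ n + 2 ^ n := by omega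
        _ = 2 ^ (n + 1) := by rw [pow_succ]; omega
        _ ≤ 2 ^ j := Nat.pow_le_pow_right (by norm_num) (by omega)
    have hc : ∀ u : ℕ, u < 2 ^ n → u.testBit j = false := by
      intro u hu
      exact Nat.testBit_eq_false_of_lt
        (lt_of_lt_of_le hu (Nat.pow_le_pow_right (by norm_num) (by omega)))
    rw [hb s hs, hb s' hs', hc s hs, hc s' hs']

lemma xor_pred_pow (h : ℕ) : (2 ^ h - 1) ^^^ 2 ^ h = 2 ^ (h + 1) - 1 := by
  apply Nat.eq_of_testBit_eq
  intro j
  rw [Nat.testBit_xor, Nat.testBit_two_pow_sub_one, Nat.testBit_two_pow,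
    Nat.testBit_two_pow_sub_one]
  by_cases h1 : j < h
  · have h2 : h ≠ j := by omega
    have h3 : j < h + 1 := by omega
    simp [h1, h2, h3]
  · by_cases h2 : h = j
    · subst h2; simp [h1]
    · have h3 : ¬ j < h + 1 := by omega
      simp [h1, h2, h3]

lemma patternF (h : ℕ) : ∀ (ι : ℕ → ℕ), (∀ a b, a < b → b < h → ι a < ι b) →
    ∀ (x : ℕ → ℕ), (∀ t, t + 1 < 2 ^ h → x t < x (t + 1)) →
    (∀ t, t + 1 < 2 ^ h → ∃ j, j < h ∧ Nat.log 2 (x t ^^^ x (t + 1)) = ι j) →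
    ∀ t, t + 1 < 2 ^ h → Nat.log 2 (x t ^^^ x (t + 1)) = ι (Nat.log 2 (t ^^^ (t + 1))) := by
  induction h with
  | zero => intro ι _ x _ _ t ht; simp at ht
  | succ h ih =>
    intro ι hι x hm hd
    have hpos : 0 < (2:ℕ) ^ h := Nat.pow_pos (n := h) (by norm_num)
    have hps : (2:ℕ) ^ (h + 1) = 2 ^ h + 2 ^ h := by rw [pow_succ]; omega
    have hιr : ∀ a b, a < b → b < h → ι a < ι b := fun a b hab hb => hι a b hab (by omega)
    have hm' : ∀ t, t < 2 ^ (h + 1) - 1 → x t < x (t + 1) := fun t ht => hm t (by omega)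
    have hd' : ∀ t, t < 2 ^ (h + 1) - 1 →
        ∃ j, j < h + 1 ∧ Nat.log 2 (x t ^^^ x (t + 1)) = ι j := fun t ht => hd t (by omega)
    have hdle : ∀ t, t < 2 ^ (h + 1) - 1 → Nat.log 2 (x t ^^^ x (t + 1)) ≤ ι h := by
      intro t ht
      obtain ⟨j, hj, he⟩ := hd' t ht
      rcases Nat.lt_succ_iff_lt_or_eq.mp hj with h' | h'
      · exact le_of_lt (he ▸ hι j h h' (by omega))
      · subst h'; omega
    have huniq := unique_max (ι h) x (2 ^ (h + 1) - 1) hm' hdle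
    have hex : ∃ T, T < 2 ^ (h + 1) - 1 ∧ Nat.log 2 (x T ^^^ x (T + 1)) = ι h := by
      by_contra hno
      push_neg at hno
      have : 2 ^ (h + 1) - 1 < 2 ^ h := by
        apply chainC h ι hιr x (2 ^ (h + 1) - 1) hm'
        intro t ht
        obtain ⟨j, hj, he⟩ := hd' t ht
        have hjh : j ≠ h := fun hjeq => hno t ht (by rw [he, hjeq])
        exact ⟨j, by omega, he⟩
      omega
    obtain ⟨T, hT, hdT⟩ := hex
    have hT1 : T < 2 ^ h := by
      apply chainC h ι hιr x T (fun t ht => hm' t (by omega))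
      intro t ht
      obtain ⟨j, hj, he⟩ := hd' t (by omega)
      have hjh : j ≠ h := fun hjeq => huniq t T ht hT (by rw [he, hjeq]) hdT
      exact ⟨j, by omega, he⟩
    have hT2 : 2 ^ (h + 1) - 1 - (T + 1) < 2 ^ h := by
      apply chainC h ι hιr (fun s => x (T + 1 + s)) (2 ^ (h + 1) - 1 - (T + 1))
      · intro s hs
        have e : T + 1 + (s + 1) = (T + 1 + s) + 1 := by omega
        rw [e]
        exact hm' (T + 1 + s) (by omega)
      · intro s hs
        show ∃ j, j < h ∧ Nat.log 2 (x (T + 1 + s) ^^^ x (T + 1 + s + 1)) = ι j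
        obtain ⟨j, hj, he⟩ := hd' (T + 1 + s) (by omega)
        have hjh : j ≠ h := fun hjeq =>
          huniq T (T + 1 + s) (by omega) (by omega) hdT (by rw [he, hjeq])
        exact ⟨j, by omega, he⟩
    have hTeq : T = 2 ^ h - 1 := by omega
    intro t ht
    rcases lt_trichotomy t T with h' | h' | h'
    · apply ih ι hιr x (fun s hs => hm s (by omega))
      · intro s hs
        obtain ⟨j, hj, he⟩ := hd' s (by omega)
        have hjh : j ≠ h := fun hjeq =>
          huniq s T (by omega) hT (by rw [he, hjeq]) hdT
        exact ⟨j, by omega, he⟩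
      · omega
    · rw [h', hdT]
      congr 1
      have e1 : T + 1 = 2 ^ h := by omega
      rw [e1, hTeq, xor_pred_pow]
      exact (Nat.log_eq_of_pow_le_of_lt_pow (by omega) (by omega)).symm
    · have hs1 : t - 2 ^ h + 1 < 2 ^ h := by omega
      have key := ih ι hιr (fun s => x (2 ^ h + s))
        (by
          intro u hu
          show x (2 ^ h + u) < x (2 ^ h + u + 1)
          exact hm (2 ^ h + u) (by omega))
        (by
          intro u hu
          show ∃ j, j < h ∧ Nat.log 2 (x (2 ^ h + u) ^^^ x (2 ^ h + u + 1)) = ι j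
          obtain ⟨j, hj, he⟩ := hd' (2 ^ h + u) (by omega)
          have hjh : j ≠ h := fun hjeq =>
            huniq T (2 ^ h + u) (by omega) (by omega) hdT (by rw [he, hjeq])
          exact ⟨j, by omega, he⟩)
        (t - 2 ^ h) hs1
      have key' : Nat.log 2 (x (2 ^ h + (t - 2 ^ h)) ^^^ x (2 ^ h + (t - 2 ^ h + 1)))
          = ι (Nat.log 2 ((t - 2 ^ h) ^^^ (t - 2 ^ h + 1))) := key
      have e1 : 2 ^ h + (t - 2 ^ h) = t := by omega
      have e2 : 2 ^ h + (t - 2 ^ h + 1) = t + 1 := by omega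
      rw [e1, e2] at key'
      have e3 := two_pow_add_xor (n := h) (s := t - 2 ^ h) (s' := t - 2 ^ h + 1)
        (by omega) (by omega)
      rw [e1, e2] at e3
      rw [key', e3]

end Stmt12Aux

open Stmt12Aux in
/-- A strictly increasing tuple `x_0 < … < x_{2^h-1}` in `{0,…,2^m-1}` is an increasing
subsequence of `f = f^↓ ∘ F_{i_h} ∘ … ∘ F_{i_1}` iff it has the binary `h`-profile
`(i_1,…,i_h)`: for every `t`, `M(x_t, x_{t+1}) = ι (M(t, t+1))`, where `M` is the most
significant differing bit index. -/
theorem stmt12 (m h : ℕ) (hh : h ≤ m) (ι : ℕ → ℕ)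
    (hmono : ∀ a b, a < b → b < h → ι a < ι b)
    (hlt : ∀ j < h, ι j < m)
    (x : ℕ → ℕ)
    (hxlt : ∀ t < 2 ^ h, x t < 2 ^ m)
    (hxmono : ∀ t, t + 1 < 2 ^ h → x t < x (t + 1)) :
    (∀ t, t + 1 < 2 ^ h →
        2 ^ m - 1 - ((List.range h).map ι).foldl (fun a i => a ^^^ 2 ^ i) (x t)
          < 2 ^ m - 1 - ((List.range h).map ι).foldl (fun a i => a ^^^ 2 ^ i) (x (t + 1)))
      ↔ (∀ t, t + 1 < 2 ^ h →
        Nat.log 2 (x t ^^^ x (t + 1)) = ι (Nat.log 2 (t ^^^ (t + 1)))) := by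
  have hfold : ∀ y : ℕ, ((List.range h).map ι).foldl (fun a i => a ^^^ 2 ^ i) y
      = y ^^^ ((List.range h).map ι).foldl (fun a i => a ^^^ 2 ^ i) 0 :=
    fun y => foldl_xor_eq _ y
  set S := ((List.range h).map ι).foldl (fun a i => a ^^^ 2 ^ i) 0 with hSdef
  have hnodup : ((List.range h).map ι).Nodup := by
    refine (List.nodup_range (n := h)).map_on ?_
    intro a ha b hb hfe
    simp only [List.mem_range] at ha hb
    by_contra hne
    rcases Nat.lt_or_ge a b with hl | hl
    · exact absurd hfe (Nat.ne_of_lt (hmono a b hl hb))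
    · exact absurd hfe.symm (Nat.ne_of_lt (hmono b a (by omega) ha))
  have hSbit : ∀ p, S.testBit p = true ↔ ∃ j, j < h ∧ ι j = p := by
    intro p
    rw [hSdef, foldl_testBit _ hnodup p]
    simp only [decide_eq_true_eq, List.mem_map, List.mem_range]
  have hSlt : S < 2 ^ m := by
    rw [hSdef]
    apply foldl_lt
    intro i hi
    simp only [List.mem_map, List.mem_range] at hi
    obtain ⟨j, hj, rfl⟩ := hi
    exact hlt j hj
  have hper : ∀ t, t + 1 < 2 ^ h →
      ((2 ^ m - 1 - (x t ^^^ S) < 2 ^ m - 1 - (x (t + 1) ^^^ S)) ↔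
        ∃ j, j < h ∧ Nat.log 2 (x t ^^^ x (t + 1)) = ι j) := by
    intro t ht
    have hab := hxmono t ht
    have h1 : x t ^^^ S < 2 ^ m := Nat.xor_lt_two_pow (hxlt t (by omega)) hSlt
    have h2 : x (t + 1) ^^^ S < 2 ^ m := Nat.xor_lt_two_pow (hxlt (t + 1) ht) hSlt
    have e1 : (2 ^ m - 1 - (x t ^^^ S) < 2 ^ m - 1 - (x (t + 1) ^^^ S))
        ↔ x (t + 1) ^^^ S < x t ^^^ S := by omega
    rw [e1, xorS_lt_iff S hab, hSbit]
    constructor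
    · rintro ⟨j, hj, he⟩; exact ⟨j, hj, he.symm⟩
    · rintro ⟨j, hj, he⟩; exact ⟨j, hj, he.symm⟩
  constructor
  · intro hL t ht
    refine patternF h ι hmono x hxmono ?_ t ht
    intro s hs
    have hs' := hL s hs
    rw [hfold (x s), hfold (x (s + 1))] at hs'
    exact (hper s hs).mp hs'
  · intro hR t ht
    rw [hfold (x t), hfold (x (t + 1))]
    apply (hper t ht).mpr
    have hne : t ^^^ (t + 1) ≠ 0 := xor_eq_zero_iff.not.mpr (by omega)
    have hlog : Nat.log 2 (t ^^^ (t + 1)) < h :=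
      Nat.log_lt_of_lt_pow hne (Nat.xor_lt_two_pow (by omega) ht)
    exact ⟨_, hlog, hR t ht⟩
end

section
/- Suppose (x₁,…,x_k) ∈ Q^k with x₁ < … < x_k has binary h-profile (j, i₂, …, i_h), and let B ⊆ Q be a maximal subset of Q such that no two elements u ≠ v of B satisfy M(u,v) < j. Then there exist y₁ < … < y_k in B with binary h-profile (j, i₂, …, i_h). -/
/-- Perturbing two numbers below bit `j` preserves the most-significant-differing-bit
`i ≥ j` and the order. -/
private lemma aux14 {i j : ℕ} (hji : j ≤ i) {a b e f : ℕ}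
    (hab : a < b) (hlog : Nat.log 2 (a ^^^ b) = i)
    (he : e < 2 ^ j) (hf : f < 2 ^ j) :
    (a ^^^ e) < (b ^^^ f) ∧ Nat.log 2 ((a ^^^ e) ^^^ (b ^^^ f)) = i := by
  have hxne : a ^^^ b ≠ 0 := by
    intro h0
    exact absurd (by have h' := congrArg (a ^^^ ·) h0; simp only [← Nat.xor_assoc, Nat.xor_self, Nat.zero_xor, Nat.xor_zero] at h'; exact h'.symm) (Nat.ne_of_lt hab)
  have hpowj : (2 : ℕ) ^ j ≤ 2 ^ i := Nat.pow_le_pow_right (by norm_num) hji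
  have he' : e < 2 ^ i := lt_of_lt_of_le he hpowj
  have hf' : f < 2 ^ i := lt_of_lt_of_le hf hpowj
  have hlow : 2 ^ i ≤ a ^^^ b := hlog ▸ Nat.pow_log_le_self 2 hxne
  have hhigh : a ^^^ b < 2 ^ (i + 1) := by
    have := Nat.lt_pow_succ_log_self (b := 2) (by norm_num) (a ^^^ b)
    rwa [hlog] at this
  -- bit i of a ^^^ b is true
  have hbit : (a ^^^ b).testBit i = true := by
    rw [Nat.testBit_eq_decide_div_mod_eq]
    have h1 : (a ^^^ b) / 2 ^ i = 1 := by
      apply Nat.div_eq_of_lt_le (by simpa using hlow)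
      have : (1 + 1) * 2 ^ i = 2 ^ (i + 1) := by ring
      omega
    simp [h1]
  -- bits above i of a ^^^ b are false
  have habove : ∀ k, i < k → (a ^^^ b).testBit k = false := by
    intro k hk
    exact Nat.testBit_lt_two_pow (lt_of_lt_of_le hhigh (Nat.pow_le_pow_right (by norm_num) hk))
  have hefalse : ∀ k, i ≤ k → e.testBit k = false := fun k hk =>
    Nat.testBit_lt_two_pow (lt_of_lt_of_le he' (Nat.pow_le_pow_right (by norm_num) hk))
  have hffalse : ∀ k, i ≤ k → f.testBit k = false := fun k hk =>
    Nat.testBit_lt_two_pow (lt_of_lt_of_le hf' (Nat.pow_le_pow_right (by norm_num) hk))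
  -- bit i: a has false, b has true
  have habit : a.testBit i = false ∧ b.testBit i = true := by
    have hdiff : a.testBit i ≠ b.testBit i := by
      intro hEq
      rw [Nat.testBit_xor, hEq] at hbit
      simp at hbit
    have hsame : ∀ k, i < k → a.testBit k = b.testBit k := by
      intro k hk
      have h' := habove k hk
      rw [Nat.testBit_xor] at h'
      revert h'
      cases a.testBit k <;> cases b.testBit k <;> simp
    by_cases ha : a.testBit i = true
    · have hb : b.testBit i = false := by
        cases hb : b.testBit i
        · rfl
        · exact absurd (hb ▸ ha) hdiff
      have : b < a := Nat.lt_of_testBit i hb ha (fun k hk => (hsame k hk).symm)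
      omega
    · have ha' : a.testBit i = false := by simpa using ha
      refine ⟨ha', ?_⟩
      cases hb : b.testBit i
      · exact absurd (hb ▸ ha') hdiff
      · rfl
  -- the perturbed pair
  have hAbit : (a ^^^ e).testBit i = false := by
    rw [Nat.testBit_xor, habit.1, hefalse i le_rfl]; rfl
  have hBbit : (b ^^^ f).testBit i = true := by
    rw [Nat.testBit_xor, habit.2, hffalse i le_rfl]; rfl
  have hABsame : ∀ k, i < k → (a ^^^ e).testBit k = (b ^^^ f).testBit k := by
    intro k hk
    have h1 := habove k hk
    rw [Nat.testBit_xor] at h1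
    have h2 := hefalse k (le_of_lt hk)
    have h3 := hffalse k (le_of_lt hk)
    rw [Nat.testBit_xor, Nat.testBit_xor, h2, h3]
    revert h1
    cases a.testBit k <;> cases b.testBit k <;> simp
  constructor
  · exact Nat.lt_of_testBit i hAbit hBbit hABsame
  · have hre : (a ^^^ e) ^^^ (b ^^^ f) = (a ^^^ b) ^^^ (e ^^^ f) := by
      rw [Nat.xor_comm b f]
      rw [Nat.xor_assoc, ← Nat.xor_assoc e f b, Nat.xor_comm (e ^^^ f) b, Nat.xor_assoc,
        ← Nat.xor_assoc]
    rw [hre]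
    apply Nat.log_eq_of_pow_le_of_lt_pow
    · apply Nat.ge_two_pow_of_testBit
      rw [Nat.testBit_xor, hbit]
      have : (e ^^^ f).testBit i = false := by
        rw [Nat.testBit_xor, hefalse i le_rfl, hffalse i le_rfl]; rfl
      rw [this]; rfl
    · exact Nat.xor_lt_two_pow hhigh
        (lt_of_lt_of_le (Nat.xor_lt_two_pow he' hf')
          (Nat.pow_le_pow_right (by norm_num) (Nat.le_succ i)))

/-- If a tuple in `Q` has binary `h`-profile `(j, i_2, …, i_h)` and `B ⊆ Q` is a maximal
subset with no two elements differing most significantly below bit `j`, then some tuple in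
`B` has the same binary `h`-profile. -/
theorem stmt14 (m h j : ℕ) (hh : 1 ≤ h) (ι : ℕ → ℕ)
    (hmono : ∀ a b, a < b → b < h → ι a < ι b)
    (hlt : ∀ a < h, ι a < m) (hι0 : ι 0 = j)
    (Q B : Finset ℕ) (hQ : Q ⊆ Finset.range (2 ^ m)) (hBQ : B ⊆ Q)
    (hBsep : ∀ u ∈ B, ∀ v ∈ B, u ≠ v → j ≤ Nat.log 2 (u ^^^ v))
    (hBmax : ∀ q ∈ Q, q ∉ B → ∃ u ∈ B, Nat.log 2 (q ^^^ u) < j)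
    (x : ℕ → ℕ) (hxQ : ∀ t < 2 ^ h, x t ∈ Q)
    (hxmono : ∀ t, t + 1 < 2 ^ h → x t < x (t + 1))
    (hxprof : ∀ t, t + 1 < 2 ^ h →
      Nat.log 2 (x t ^^^ x (t + 1)) = ι (Nat.log 2 (t ^^^ (t + 1)))) :
    ∃ y : ℕ → ℕ, (∀ t < 2 ^ h, y t ∈ B) ∧
      (∀ t, t + 1 < 2 ^ h → y t < y (t + 1)) ∧
      (∀ t, t + 1 < 2 ^ h →
        Nat.log 2 (y t ^^^ y (t + 1)) = ι (Nat.log 2 (t ^^^ (t + 1)))) := by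
  classical
  choose u hu hulog using hBmax
  set y : ℕ → ℕ := fun t =>
    if hb : x t ∈ B then x t else if hq : x t ∈ Q then u (x t) hq hb else 0 with hy
  have hkey : ∀ t < 2 ^ h, y t ∈ B ∧ (x t ^^^ y t) < 2 ^ j := by
    intro t ht
    by_cases hb : x t ∈ B
    · refine ⟨by simp [hy, hb], ?_⟩
      simp only [hy, dif_pos hb]
      simpa using Nat.pos_pow_of_pos j (by norm_num : 0 < 2)
    · have hq := hxQ t ht
      refine ⟨by simp [hy, hb, hq, hu], ?_⟩
      simp only [hy, dif_neg hb, dif_pos hq]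
      exact Nat.lt_pow_of_log_lt (by norm_num) (hulog (x t) hq hb)
  -- j ≤ ι (Nat.log 2 (t ^^^ (t+1))) whenever t + 1 < 2 ^ h
  have hji : ∀ t : ℕ, t + 1 < 2 ^ h → j ≤ ι (Nat.log 2 (t ^^^ (t + 1))) := by
    intro t ht
    have hne : t ^^^ (t + 1) ≠ 0 := by
      intro h0
      have : t = t + 1 := by have h' := congrArg (t ^^^ ·) h0; simp only [← Nat.xor_assoc, Nat.xor_self, Nat.zero_xor, Nat.xor_zero] at h'; exact h'.symm
      omega
    have hlt2 : t ^^^ (t + 1) < 2 ^ h :=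
      Nat.xor_lt_two_pow (by omega) ht
    have hlog : Nat.log 2 (t ^^^ (t + 1)) < h := Nat.log_lt_of_lt_pow hne hlt2
    rcases Nat.eq_zero_or_pos (Nat.log 2 (t ^^^ (t + 1))) with h0 | h0
    · rw [h0, hι0]
    · have := hmono 0 _ h0 hlog
      omega
  refine ⟨y, fun t ht => (hkey t ht).1, ?_, ?_⟩
  · intro t ht
    have h1 := hkey t (by omega)
    have h2 := hkey (t + 1) ht
    have := aux14 (hji t ht) (hxmono t ht) (hxprof t ht) h1.2 h2.2
    have e1 : x t ^^^ (x t ^^^ y t) = y t := by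
      rw [← Nat.xor_assoc, Nat.xor_self, Nat.zero_xor]
    have e2 : x (t + 1) ^^^ (x (t + 1) ^^^ y (t + 1)) = y (t + 1) := by
      rw [← Nat.xor_assoc, Nat.xor_self, Nat.zero_xor]
    rw [e1, e2] at this
    exact this.1
  · intro t ht
    have h1 := hkey t (by omega)
    have h2 := hkey (t + 1) ht
    have := aux14 (hji t ht) (hxmono t ht) (hxprof t ht) h1.2 h2.2
    have e1 : x t ^^^ (x t ^^^ y t) = y t := by
      rw [← Nat.xor_assoc, Nat.xor_self, Nat.zero_xor]
    have e2 : x (t + 1) ^^^ (x (t + 1) ^^^ y (t + 1)) = y (t + 1) := by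
      rw [← Nat.xor_assoc, Nat.xor_self, Nat.zero_xor]
    rw [e1, e2] at this
    exact this.2
end

section
/- Suppose index a ∈ [n] starts an (α, β)-growing suffix of f with β ≥ Ck·α for a sufficiently large constant C. If for each segment S_t(a) we sample ⌈1/α₀⌉ uniform indices (α₀ ≤ α) independently, then with probability at least 99/100 the sampled set contains a length-k increasing subsequence of f. In particular, letting E_t be the event that the sample from S_t(a) hits D_t(a), the E_t are independent, the expected number of successes is at least Ck/20, and any k successes in distinct segments yield an increasing subsequence of length k. -/
open scoped Classical

lemma aux_filter_iff {A : Type*} [Fintype A] (p q : A → Prop) [DecidablePred p]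
    [DecidablePred q] (h : ∀ x, p x ↔ q x) :
    (Finset.univ.filter p).card = (Finset.univ.filter q).card := by
  congr 1
  exact Finset.filter_congr (fun x _ => h x)

open Finset in
lemma aux_card_pi {ι κ : Type*} [DecidableEq ι] [Fintype ι] [Fintype κ] [DecidableEq κ]
    (p : (ι → κ) → Prop) [DecidablePred p] (P : ι → κ → Prop) [∀ t, DecidablePred (P t)]
    (hp : ∀ σ, p σ ↔ ∀ t, P t (σ t)) :
    (Finset.univ.filter p).card = ∏ t, (Finset.univ.filter fun g => P t g).card := by
  have h0 : (Finset.univ.filter p).card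
      = (Finset.univ.filter fun σ : ι → κ => ∀ t, P t (σ t)).card := by
    congr 1; exact Finset.filter_congr (fun x _ => hp x)
  rw [h0]
  have h1 : (Finset.univ.filter fun σ : ι → κ => ∀ t, P t (σ t)).card
      = Fintype.card {σ : ι → κ // ∀ t, P t (σ t)} := (Fintype.card_subtype _).symm
  rw [h1, Fintype.card_congr (Equiv.subtypePiEquivPi (p := P)), Fintype.card_pi]
  exact Finset.prod_congr rfl fun t _ => Fintype.card_subtype _

lemma aux_hit_lb (δ α α₀ : ℝ) (T : ℕ) (h0 : 0 ≤ δ) (h1 : δ ≤ 1) (hδα : δ ≤ α)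
    (hα₀ : 0 < α₀) (hαα : α₀ ≤ α) (hT : 1 ≤ α₀ * T) :
    δ / (2 * α) ≤ 1 - (1 - δ) ^ T := by
  have hα : 0 < α := lt_of_lt_of_le hα₀ hαα
  have hbern : 1 + (T : ℝ) * δ ≤ (1 + δ) ^ T := one_add_mul_le_pow (by linarith) T
  have hnn : (0:ℝ) ≤ (1 - δ) ^ T := pow_nonneg (by linarith) T
  have hsq : (1 - δ) ^ T * (1 + δ) ^ T ≤ 1 := by
    rw [← mul_pow]
    have : (1 - δ) * (1 + δ) = 1 - δ ^ 2 := by ring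
    rw [this]
    exact pow_le_one₀ (by nlinarith) (by nlinarith)
  have key : (1 - δ) ^ T * (1 + (T:ℝ) * δ) ≤ 1 := by
    calc (1 - δ) ^ T * (1 + (T:ℝ) * δ) ≤ (1 - δ) ^ T * (1 + δ) ^ T :=
          mul_le_mul_of_nonneg_left hbern hnn
      _ ≤ 1 := hsq
  have hTα : 1 ≤ α * T := le_trans hT (mul_le_mul_of_nonneg_right hαα (Nat.cast_nonneg T))
  rw [div_le_iff₀ (by linarith : (0:ℝ) < 2 * α)]
  nlinarith [mul_nonneg h0 hnn, mul_nonneg (mul_nonneg h0 h0) (Nat.cast_nonneg T),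
    mul_le_mul_of_nonneg_right hδα (Nat.cast_nonneg T)]

lemma aux_sum_Icc (η : ℕ) (F : ℕ → ℝ) :
    ∑ t ∈ Finset.Icc 1 η, F t = ∑ t : Fin η, F ((t:ℕ)+1) := by
  rw [← Finset.Ico_add_one_right_eq_Icc, Finset.sum_Ico_eq_sum_range]
  rw [Fin.sum_univ_eq_sum_range (fun j => F (j+1)) η]
  have h : η + 1 - 1 = η := by omega
  rw [h]
  exact Finset.sum_congr rfl fun i _ => by rw [Nat.add_comm 1 i]

set_option maxHeartbeats 4000000 in
/-- The growing-suffix sampling algorithm: if `a` starts an `(α, β)`-growing suffix of `f`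
with `β ≥ Ckα` for a sufficiently large constant `C`, and from each segment `S_t(a)` we
sample `⌈1/α₀⌉` uniform indices (with `α₀ ≤ α`) independently, then with probability at
least `99/100` (in counting form over all valid sample outcomes) the sampled set contains a
length-`k` increasing subsequence of `f`.  Moreover the expected number of segments whose
sample hits `D_t(a)` is at least `Ck/20`, and any `k` hits in distinct segments yield a
length-`k` increasing subsequence. -/
theorem stmt16 :
    ∃ C : ℝ, 0 < C ∧
      ∀ (n k a η T : ℕ) (f : Fin n → ℝ) (S D : ℕ → Finset (Fin n)) (α α₀ β : ℝ),
        2 ≤ k → a < n →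
        η = Nat.clog 2 (n - a) →
        (∀ t, 1 ≤ t → t ≤ η →
          S t = Finset.univ.filter
            (fun i : Fin n => a + 2 ^ (t - 1) ≤ (i : ℕ) ∧ (i : ℕ) < a + 2 ^ t)) →
        (∀ t, D t ⊆ S t) →
        0 < α₀ → α₀ ≤ α → C * k * α ≤ β →
        (∀ t, 1 ≤ t → t ≤ η → ((D t).card : ℝ) ≤ α * (S t).card) →
        β ≤ ∑ t ∈ Finset.Icc 1 η, ((D t).card : ℝ) / (S t).card →
        (∀ t t', 1 ≤ t → t < t' → t' ≤ η → ∀ b ∈ D t, ∀ b' ∈ D t', f b < f b') →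
        T = ⌈1 / α₀⌉₊ →
        ((∀ σ : Fin η → Fin T → Fin n,
          (∀ (t : Fin η) (u : Fin T), σ t u ∈ S ((t : ℕ) + 1)) →
          ∀ ts : Fin k → Fin η, StrictMono ts →
          (∀ l, ∃ u, σ (ts l) u ∈ D ((ts l : ℕ) + 1)) →
          ∃ s : Fin k → Fin n, StrictMono s ∧ StrictMono (f ∘ s) ∧
            ∀ l, ∃ (t : Fin η) (u : Fin T), s l = σ t u) ∧
        (C * k / 20 *
            ((Finset.univ.filter (fun σ : Fin η → Fin T → Fin n =>
              ∀ (t : Fin η) (u : Fin T), σ t u ∈ S ((t : ℕ) + 1))).card : ℝ) ≤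
          ∑ t : Fin η,
            (((Finset.univ.filter (fun σ : Fin η → Fin T → Fin n =>
              (∀ (t' : Fin η) (u : Fin T), σ t' u ∈ S ((t' : ℕ) + 1)) ∧
              ∃ u : Fin T, σ t u ∈ D ((t : ℕ) + 1))).card : ℝ))) ∧
        ((99 : ℝ) / 100 *
            ((Finset.univ.filter (fun σ : Fin η → Fin T → Fin n =>
              ∀ (t : Fin η) (u : Fin T), σ t u ∈ S ((t : ℕ) + 1))).card : ℝ) ≤
          ((Finset.univ.filter (fun σ : Fin η → Fin T → Fin n =>
            (∀ (t : Fin η) (u : Fin T), σ t u ∈ S ((t : ℕ) + 1)) ∧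
            ∃ s : Fin k → Fin n, StrictMono s ∧ StrictMono (f ∘ s) ∧
              ∀ l, ∃ (t : Fin η) (u : Fin T), s l = σ t u)).card : ℝ))) := by
  refine ⟨400, by norm_num, ?_⟩
  intro n k a η T f S D α α₀ β hk han hη hS hDS hα₀ hαα hCβ hDcard hβsum hmono hT
  have hα : (0:ℝ) < α := lt_of_lt_of_le hα₀ hαα
  have hkR : (2:ℝ) ≤ (k:ℝ) := by exact_mod_cast hk
  -- β ≤ η * α, hence 400 * k ≤ η
  have hterm : ∀ t ∈ Finset.Icc 1 η, ((D t).card : ℝ) / (S t).card ≤ α := by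
    intro t ht
    simp only [Finset.mem_Icc] at ht
    rcases Nat.eq_zero_or_pos (S t).card with h0 | h0
    · simp [h0, le_of_lt hα]
    · rw [div_le_iff₀ (by exact_mod_cast h0)]
      rw [mul_comm]
      exact le_of_le_of_eq (hDcard t ht.1 ht.2) (mul_comm _ _)
  have hβη : β ≤ (η : ℝ) * α := by
    calc β ≤ ∑ t ∈ Finset.Icc 1 η, ((D t).card : ℝ) / (S t).card := hβsum
      _ ≤ ∑ t ∈ Finset.Icc 1 η, α := Finset.sum_le_sum hterm
      _ = (η : ℝ) * α := by
          rw [Finset.sum_const, Nat.card_Icc]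
          simp [nsmul_eq_mul]
  have hηk : 400 * (k:ℝ) ≤ (η : ℝ) := by
    have h1 : 400 * (k:ℝ) * α ≤ (η:ℝ) * α := le_trans hCβ hβη
    exact le_of_mul_le_mul_right (by linarith) hα
  have hη1 : 0 < η := by
    by_contra h
    push_neg at h
    interval_cases η
    simp at hηk
    linarith
  -- n - a ≥ 2
  have hna : 1 < n - a := by
    by_contra h
    push_neg at h
    have : Nat.clog 2 (n - a) = 0 := Nat.clog_of_right_le_one h 2
    omega
  -- segments are nonempty
  have hSmem : ∀ t : Fin η, (⟨a + 2 ^ (t:ℕ), by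
      have h2 : 2 ^ (t:ℕ) ≤ 2 ^ (η - 1) := Nat.pow_le_pow_right (by norm_num) (by omega)
      have h3 : 2 ^ (η - 1) < n - a := by
        have := Nat.pow_pred_clog_lt_self (b := 2) (by norm_num) hna
        rw [← hη] at this
        exact this
      omega⟩ : Fin n) ∈ S ((t:ℕ) + 1) := by
    intro t
    rw [hS ((t:ℕ)+1) (by omega) (by omega)]
    simp only [Finset.mem_filter, Finset.mem_univ, true_and]
    constructor
    · simp
    · have : 2 ^ (t:ℕ) < 2 ^ ((t:ℕ)+1) := by
        exact Nat.pow_lt_pow_right (by norm_num) (by omega)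
      simp
      omega
  obtain ⟨N, hN⟩ : ∃ N : Fin η → ℕ, ∀ t, N t = (S ((t:ℕ) + 1)).card :=
    ⟨_, fun _ => rfl⟩
  obtain ⟨M, hM⟩ : ∃ M : Fin η → ℕ, ∀ t, M t = (D ((t:ℕ) + 1)).card :=
    ⟨_, fun _ => rfl⟩
  have hNpos : ∀ t, 0 < N t := fun t => by
    rw [hN t]; exact Finset.card_pos.mpr ⟨_, hSmem t⟩
  have hMN : ∀ t, M t ≤ N t := fun t => by
    rw [hN t, hM t]; exact Finset.card_le_card (hDS _)
  have hT1 : (1:ℝ) / α₀ ≤ (T:ℝ) := by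
    rw [hT]; exact Nat.le_ceil _
  -- per-coordinate counts
  have hq : ∀ t : Fin η, (Finset.univ.filter fun g : Fin T → Fin n =>
      ∀ u, g u ∈ S ((t:ℕ)+1)).card = N t ^ T := by
    intro t
    rw [aux_card_pi (fun g : Fin T → Fin n => ∀ u, g u ∈ S ((t:ℕ)+1))
      (fun (_ : Fin T) (i : Fin n) => i ∈ S ((t:ℕ)+1)) (fun σ => Iff.rfl)]
    have h2 : (Finset.univ.filter fun i : Fin n => i ∈ S ((t:ℕ)+1)).card = N t := by
      rw [hN t]; congr 1; ext i; simp
    simp only [h2, Finset.prod_const, Finset.card_univ, Fintype.card_fin]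
  have hb : ∀ t : Fin η, (Finset.univ.filter fun g : Fin T → Fin n =>
      ∀ u, g u ∈ S ((t:ℕ)+1) ∧ g u ∉ D ((t:ℕ)+1)).card = (N t - M t) ^ T := by
    intro t
    rw [aux_card_pi (fun g : Fin T → Fin n => ∀ u, g u ∈ S ((t:ℕ)+1) ∧ g u ∉ D ((t:ℕ)+1))
      (fun (_ : Fin T) (i : Fin n) => i ∈ S ((t:ℕ)+1) ∧ i ∉ D ((t:ℕ)+1)) (fun σ => Iff.rfl)]
    have h2 : (Finset.univ.filter fun i : Fin n =>
        i ∈ S ((t:ℕ)+1) ∧ i ∉ D ((t:ℕ)+1)).card = N t - M t := by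
      have : (Finset.univ.filter fun i : Fin n => i ∈ S ((t:ℕ)+1) ∧ i ∉ D ((t:ℕ)+1))
          = S ((t:ℕ)+1) \ D ((t:ℕ)+1) := by
        ext i; simp [Finset.mem_sdiff]
      rw [this, Finset.card_sdiff_of_subset (hDS _), hN t, hM t]
    simp only [h2, Finset.prod_const, Finset.card_univ, Fintype.card_fin]
  have hg : ∀ t : Fin η, (Finset.univ.filter fun g : Fin T → Fin n =>
      (∀ u, g u ∈ S ((t:ℕ)+1)) ∧ ∃ u, g u ∈ D ((t:ℕ)+1)).card + (N t - M t) ^ T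
        = N t ^ T := by
    intro t
    rw [← hq t, ← hb t]
    have hsplit := Finset.card_filter_add_card_filter_not
      (s := Finset.univ.filter fun g : Fin T → Fin n => ∀ u, g u ∈ S ((t:ℕ)+1))
      (p := fun g => ∃ u, g u ∈ D ((t:ℕ)+1))
    rw [Finset.filter_filter, Finset.filter_filter] at hsplit
    have heq : (Finset.univ.filter fun g : Fin T → Fin n =>
        (∀ u, g u ∈ S ((t:ℕ)+1)) ∧ ¬∃ u, g u ∈ D ((t:ℕ)+1))
        = (Finset.univ.filter fun g : Fin T → Fin n =>
        ∀ u, g u ∈ S ((t:ℕ)+1) ∧ g u ∉ D ((t:ℕ)+1)) := by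
      ext g
      simp only [Finset.mem_filter, Finset.mem_univ, true_and]
      constructor
      · rintro ⟨hbase, hno⟩ u
        exact ⟨hbase u, fun hd => hno ⟨u, hd⟩⟩
      · intro h
        exact ⟨fun u => (h u).1, fun hex => hex.elim fun u hd => (h u).2 hd⟩
    rw [heq] at hsplit
    exact hsplit
  obtain ⟨G, hG⟩ : ∃ G : Fin η → ℕ, ∀ t : Fin η,
      G t = (Finset.univ.filter fun g : Fin T → Fin n =>
        (∀ u, g u ∈ S ((t:ℕ)+1)) ∧ ∃ u, g u ∈ D ((t:ℕ)+1)).card :=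
    ⟨_, fun _ => rfl⟩
  -- total count
  have hB : (Finset.univ.filter fun σ : Fin η → Fin T → Fin n =>
      ∀ (t : Fin η) (u : Fin T), σ t u ∈ S ((t:ℕ)+1)).card = ∏ t : Fin η, N t ^ T := by
    rw [aux_card_pi (fun σ : Fin η → Fin T → Fin n =>
        ∀ (t : Fin η) (u : Fin T), σ t u ∈ S ((t:ℕ)+1))
      (fun (t : Fin η) (g : Fin T → Fin n) => ∀ u, g u ∈ S ((t:ℕ)+1)) (fun σ => Iff.rfl)]
    exact Finset.prod_congr rfl fun t _ => hq t
  have hBR : ((Finset.univ.filter fun σ : Fin η → Fin T → Fin n =>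
      ∀ (t : Fin η) (u : Fin T), σ t u ∈ S ((t:ℕ)+1)).card : ℝ)
      = ∏ t : Fin η, ((N t:ℝ))^T := by
    rw [hB]
    push_cast
    rfl
  clear hB
  -- single event count
  have hc : ∀ t : Fin η, (Finset.univ.filter fun σ : Fin η → Fin T → Fin n =>
      (∀ (t' : Fin η) (u : Fin T), σ t' u ∈ S ((t':ℕ)+1)) ∧
        ∃ u : Fin T, σ t u ∈ D ((t:ℕ)+1)).card
      = G t * ∏ r ∈ Finset.univ.erase t, N r ^ T := by
    intro t
    rw [hG t]
    rw [aux_card_pi (fun σ : Fin η → Fin T → Fin n =>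
        (∀ (t' : Fin η) (u : Fin T), σ t' u ∈ S ((t':ℕ)+1)) ∧
          ∃ u : Fin T, σ t u ∈ D ((t:ℕ)+1))
      (fun (r : Fin η) (g : Fin T → Fin n) =>
        (∀ u, g u ∈ S ((r:ℕ)+1)) ∧ (r = t → ∃ u, g u ∈ D ((t:ℕ)+1)))
      (fun σ => by
        constructor
        · rintro ⟨hbase, hh⟩ r
          exact ⟨hbase r, fun h => by subst h; exact hh⟩
        · intro h
          exact ⟨fun r => (h r).1, (h t).2 rfl⟩)]
    rw [← Finset.mul_prod_erase Finset.univ _ (Finset.mem_univ t)]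
    congr 1
    · rw [aux_filter_iff _ (fun g : Fin T → Fin n =>
          (∀ u, g u ∈ S ((t:ℕ)+1)) ∧ ∃ u, g u ∈ D ((t:ℕ)+1))
        (fun g => by simp)]
    · refine Finset.prod_congr rfl fun r hr => ?_
      have hrt : r ≠ t := (Finset.mem_erase.mp hr).1
      rw [aux_filter_iff _ (fun g : Fin T → Fin n => ∀ u, g u ∈ S ((r:ℕ)+1))
        (fun g => by simp [hrt])]
      exact hq r
  -- pair event count
  have hc2 : ∀ t s : Fin η, t ≠ s →
      (Finset.univ.filter fun σ : Fin η → Fin T → Fin n =>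
        (∀ (t' : Fin η) (u : Fin T), σ t' u ∈ S ((t':ℕ)+1)) ∧
          (∃ u : Fin T, σ t u ∈ D ((t:ℕ)+1)) ∧ (∃ u : Fin T, σ s u ∈ D ((s:ℕ)+1))).card
      = G t * (G s * ∏ r ∈ (Finset.univ.erase t).erase s, N r ^ T) := by
    intro t s hts
    rw [hG t, hG s]
    rw [aux_card_pi (fun σ : Fin η → Fin T → Fin n =>
        (∀ (t' : Fin η) (u : Fin T), σ t' u ∈ S ((t':ℕ)+1)) ∧
          (∃ u : Fin T, σ t u ∈ D ((t:ℕ)+1)) ∧ (∃ u : Fin T, σ s u ∈ D ((s:ℕ)+1)))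
      (fun (r : Fin η) (g : Fin T → Fin n) =>
        (∀ u, g u ∈ S ((r:ℕ)+1)) ∧ (r = t → ∃ u, g u ∈ D ((t:ℕ)+1)) ∧
          (r = s → ∃ u, g u ∈ D ((s:ℕ)+1)))
      (fun σ => by
        constructor
        · rintro ⟨hbase, hh1, hh2⟩ r
          exact ⟨hbase r, fun h => by subst h; exact hh1, fun h => by subst h; exact hh2⟩
        · intro h
          exact ⟨fun r => (h r).1, (h t).2.1 rfl, (h s).2.2 rfl⟩)]
    rw [← Finset.mul_prod_erase Finset.univ _ (Finset.mem_univ t)]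
    congr 1
    · rw [aux_filter_iff _ (fun g : Fin T → Fin n =>
          (∀ u, g u ∈ S ((t:ℕ)+1)) ∧ ∃ u, g u ∈ D ((t:ℕ)+1))
        (fun g => by simp [hts, Ne.symm hts])]
    rw [← Finset.mul_prod_erase (Finset.univ.erase t) _
      (Finset.mem_erase.mpr ⟨Ne.symm hts, Finset.mem_univ s⟩)]
    congr 1
    · rw [aux_filter_iff _ (fun g : Fin T → Fin n =>
          (∀ u, g u ∈ S ((s:ℕ)+1)) ∧ ∃ u, g u ∈ D ((s:ℕ)+1))
        (fun g => by simp [hts, Ne.symm hts])]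
    · refine Finset.prod_congr rfl fun r hr => ?_
      have hrs : r ≠ s := (Finset.mem_erase.mp hr).1
      have hrt : r ≠ t := (Finset.mem_erase.mp (Finset.mem_erase.mp hr).2).1
      rw [aux_filter_iff _ (fun g : Fin T → Fin n => ∀ u, g u ∈ S ((r:ℕ)+1))
        (fun g => by simp [hrt, hrs])]
      exact hq r
  -- first bullet
  have hfirst : ∀ σ : Fin η → Fin T → Fin n,
      (∀ (t : Fin η) (u : Fin T), σ t u ∈ S ((t:ℕ)+1)) →
      ∀ ts : Fin k → Fin η, StrictMono ts →
      (∀ l, ∃ u, σ (ts l) u ∈ D ((ts l : ℕ)+1)) →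
      ∃ s : Fin k → Fin n, StrictMono s ∧ StrictMono (f ∘ s) ∧
        ∀ l, ∃ (t : Fin η) (u : Fin T), s l = σ t u := by
    intro σ hσ ts hts hhit
    choose u hu using hhit
    have hrange : ∀ j, a + 2 ^ (ts j:ℕ) ≤ (σ (ts j) (u j) : ℕ) ∧
        (σ (ts j) (u j):ℕ) < a + 2 ^ ((ts j:ℕ)+1) := by
      intro j
      have hmem : σ (ts j) (u j) ∈ S ((ts j:ℕ)+1) := hDS _ (hu j)
      have hlt := (ts j).isLt
      rw [hS ((ts j:ℕ)+1) (by omega) (by omega)] at hmem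
      simpa using hmem
    refine ⟨fun l => σ (ts l) (u l), ?_, ?_, fun l => ⟨ts l, u l, rfl⟩⟩
    · intro l l' hll
      have h1 : (ts l : ℕ) < ts l' := hts hll
      have h2 := (hrange l).2
      have h3 := (hrange l').1
      have hpow : 2 ^ ((ts l:ℕ)+1) ≤ 2 ^ (ts l':ℕ) := Nat.pow_le_pow_right (by norm_num) (by omega)
      have hlt : (σ (ts l) (u l) : ℕ) < (σ (ts l') (u l') : ℕ) := by omega
      exact Fin.lt_def.mpr hlt
    · intro l l' hll
      have h0 : (ts l:ℕ) < (ts l':ℕ) := hts hll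
      have hlt := (ts l').isLt
      exact hmono ((ts l:ℕ)+1) ((ts l':ℕ)+1) (by omega) (by omega) (by omega) _ (hu l) _ (hu l')
  -- probabilities
  obtain ⟨p, hp⟩ : ∃ p : Fin η → ℝ, ∀ t, p t = (G t : ℝ) / ((N t : ℝ) ^ T) :=
    ⟨_, fun _ => rfl⟩
  have hNRpos : ∀ t : Fin η, (0:ℝ) < (N t : ℝ) := fun t => by exact_mod_cast hNpos t
  have hNTpos : ∀ t : Fin η, (0:ℝ) < (N t:ℝ) ^ T := fun t => pow_pos (hNRpos t) T
  have hgN : ∀ t : Fin η, (G t : ℝ) = (N t:ℝ)^T - ((N t:ℝ) - (M t:ℝ))^T := by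
    intro t
    have h : G t + (N t - M t) ^ T = N t ^ T := by rw [hG t]; exact hg t
    have hcast : ((N t - M t : ℕ) : ℝ) = (N t:ℝ) - M t := by
      rw [Nat.cast_sub (hMN t)]
    have h2 : (G t : ℝ) + ((N t - M t : ℕ):ℝ)^T = (N t:ℝ)^T := by exact_mod_cast congrArg (Nat.cast : ℕ → ℝ) h
    rw [hcast] at h2
    linarith
  have hp_lb : ∀ t : Fin η, ((M t:ℝ)/(N t)) / (2*α) ≤ p t := by
    intro t
    have hNt := hNRpos t
    have h0 : 0 ≤ (M t:ℝ)/N t := by positivity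
    have h1 : (M t:ℝ)/N t ≤ 1 := by
      rw [div_le_one hNt]; exact_mod_cast hMN t
    have hδα : (M t:ℝ)/N t ≤ α := by
      rw [div_le_iff₀ hNt, hM t, hN t]
      exact hDcard ((t:ℕ)+1) (by omega) (by omega)
    have hTα : 1 ≤ α₀ * T := by
      rw [div_le_iff₀ hα₀] at hT1
      linarith
    have hkey := aux_hit_lb ((M t:ℝ)/N t) α α₀ T h0 h1 hδα hα₀ hαα hTα
    have hEq : p t = 1 - (1 - (M t:ℝ)/N t)^T := by
      rw [hp t, hgN t]
      have hd : (1 : ℝ) - (M t:ℝ)/N t = ((N t:ℝ) - M t)/N t := by field_simp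
      rw [hd, div_pow]
      field_simp
    rw [hEq]
    exact hkey
  have hre : ∑ t ∈ Finset.Icc 1 η, ((D t).card:ℝ)/((S t).card)
      = ∑ t : Fin η, ((M t:ℝ)/(N t)) := by
    rw [aux_sum_Icc η (fun t => ((D t).card:ℝ)/((S t).card))]
    exact Finset.sum_congr rfl fun t _ => by rw [hM t, hN t]
  obtain ⟨μ, hμ⟩ : ∃ μ : ℝ, μ = ∑ t : Fin η, p t := ⟨_, rfl⟩
  have hμk : 200 * (k:ℝ) ≤ μ := by
    have h1 : ∑ t : Fin η, ((M t:ℝ)/(N t)) / (2*α) ≤ ∑ t : Fin η, p t :=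
      Finset.sum_le_sum fun t _ => hp_lb t
    rw [← Finset.sum_div, ← hre] at h1
    have h2 : β / (2*α) ≤ (∑ t ∈ Finset.Icc 1 η, ((D t).card:ℝ)/((S t).card)) / (2*α) := by
      gcongr
    have h3 : 400 * (k:ℝ) * α / (2*α) = 200 * k := by
      field_simp
      ring
    have h4 : 400 * (k:ℝ) * α / (2*α) ≤ β / (2*α) := by
      gcongr
    rw [hμ]
    calc (200:ℝ) * k = 400*k*α/(2*α) := h3.symm
      _ ≤ β / (2*α) := h4
      _ ≤ _ := le_trans h2 h1
  have hμ4 : (400:ℝ) ≤ μ := by nlinarith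
  have hBpos : (0:ℝ) < ∏ t : Fin η, (N t:ℝ)^T :=
    Finset.prod_pos (fun t _ => hNTpos t)
  have hcR : ∀ t : Fin η, ((Finset.univ.filter fun σ : Fin η → Fin T → Fin n =>
      (∀ (t' : Fin η) (u : Fin T), σ t' u ∈ S ((t':ℕ)+1)) ∧
        ∃ u : Fin T, σ t u ∈ D ((t:ℕ)+1)).card : ℝ)
      = p t * ∏ r : Fin η, (N r:ℝ)^T := by
    intro t
    rw [hc t]
    push_cast
    rw [← Finset.mul_prod_erase Finset.univ (fun r => (N r:ℝ)^T) (Finset.mem_univ t), hp t]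
    have h1 : ((N t:ℝ))^T ≠ 0 := (hNTpos t).ne'
    field_simp
  have hc2R : ∀ t s : Fin η, t ≠ s →
      ((Finset.univ.filter fun σ : Fin η → Fin T → Fin n =>
        (∀ (t' : Fin η) (u : Fin T), σ t' u ∈ S ((t':ℕ)+1)) ∧
          (∃ u : Fin T, σ t u ∈ D ((t:ℕ)+1)) ∧ (∃ u : Fin T, σ s u ∈ D ((s:ℕ)+1))).card : ℝ)
      = p t * p s * ∏ r : Fin η, (N r:ℝ)^T := by
    intro t s hts
    rw [hc2 t s hts]
    push_cast
    rw [← Finset.mul_prod_erase Finset.univ (fun r => (N r:ℝ)^T) (Finset.mem_univ t),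
      ← Finset.mul_prod_erase (Finset.univ.erase t) (fun r => (N r:ℝ)^T)
        (Finset.mem_erase.mpr ⟨Ne.symm hts, Finset.mem_univ s⟩), hp t, hp s]
    have h1 : ((N t:ℝ))^T ≠ 0 := (hNTpos t).ne'
    have h2 : ((N s:ℝ))^T ≠ 0 := (hNTpos s).ne'
    field_simp
  set Ω := Finset.univ.filter (fun σ : Fin η → Fin T → Fin n =>
    ∀ (t : Fin η) (u : Fin T), σ t u ∈ S ((t:ℕ)+1)) with hΩ
  obtain ⟨X, hX⟩ : ∃ X : (Fin η → Fin T → Fin n) → ℕ, ∀ σ,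
      X σ = (Finset.univ.filter fun t : Fin η => ∃ u, σ t u ∈ D ((t:ℕ)+1)).card :=
    ⟨_, fun _ => rfl⟩
  have hXcast : ∀ σ : Fin η → Fin T → Fin n,
      (X σ : ℝ) = ∑ t : Fin η, (if ∃ u, σ t u ∈ D ((t:ℕ)+1) then (1:ℝ) else 0) := by
    intro σ
    rw [hX σ, Finset.card_filter]
    push_cast
    exact Finset.sum_congr rfl fun t _ => by split <;> simp
  have hS1 : ∑ σ ∈ Ω, (X σ : ℝ) = μ * ∏ r : Fin η, (N r:ℝ)^T := by
    calc ∑ σ ∈ Ω, (X σ:ℝ)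
        = ∑ σ ∈ Ω, ∑ t : Fin η, (if ∃ u, σ t u ∈ D ((t:ℕ)+1) then (1:ℝ) else 0) :=
          Finset.sum_congr rfl fun σ _ => hXcast σ
      _ = ∑ t : Fin η, ∑ σ ∈ Ω, (if ∃ u, σ t u ∈ D ((t:ℕ)+1) then (1:ℝ) else 0) :=
          Finset.sum_comm
      _ = ∑ t : Fin η, ((Ω.filter fun σ => ∃ u, σ t u ∈ D ((t:ℕ)+1)).card : ℝ) :=
          Finset.sum_congr rfl fun t _ => by rw [Finset.sum_boole]
      _ = ∑ t : Fin η, p t * ∏ r : Fin η, (N r:ℝ)^T := by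
          refine Finset.sum_congr rfl fun t _ => ?_
          rw [hΩ, Finset.filter_filter]
          exact hcR t
      _ = μ * ∏ r : Fin η, (N r:ℝ)^T := by rw [hμ, Finset.sum_mul]
  have hS2 : ∑ σ ∈ Ω, (X σ : ℝ)^2
      = μ * (∏ r : Fin η, (N r:ℝ)^T) + μ^2 * (∏ r : Fin η, (N r:ℝ)^T)
        - (∑ t : Fin η, (p t)^2) * (∏ r : Fin η, (N r:ℝ)^T) := by
    have hstep : ∀ σ, (X σ:ℝ)^2 = ∑ t : Fin η, ∑ s : Fin η,
        (if (∃ u, σ t u ∈ D ((t:ℕ)+1)) ∧ (∃ u, σ s u ∈ D ((s:ℕ)+1)) then (1:ℝ) else 0) := by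
      intro σ
      rw [sq, hXcast σ, Finset.sum_mul_sum]
      refine Finset.sum_congr rfl fun t _ => Finset.sum_congr rfl fun s _ => ?_
      by_cases h1 : (∃ u, σ t u ∈ D ((t:ℕ)+1)) <;>
        by_cases h2 : (∃ u, σ s u ∈ D ((s:ℕ)+1)) <;> simp [h1, h2]
    calc ∑ σ ∈ Ω, (X σ:ℝ)^2
        = ∑ σ ∈ Ω, ∑ t : Fin η, ∑ s : Fin η,
            (if (∃ u, σ t u ∈ D ((t:ℕ)+1)) ∧ (∃ u, σ s u ∈ D ((s:ℕ)+1)) then (1:ℝ) else 0) :=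
          Finset.sum_congr rfl fun σ _ => hstep σ
      _ = ∑ t : Fin η, ∑ σ ∈ Ω, ∑ s : Fin η,
            (if (∃ u, σ t u ∈ D ((t:ℕ)+1)) ∧ (∃ u, σ s u ∈ D ((s:ℕ)+1)) then (1:ℝ) else 0) :=
          Finset.sum_comm
      _ = ∑ t : Fin η, ∑ s : Fin η, ∑ σ ∈ Ω,
            (if (∃ u, σ t u ∈ D ((t:ℕ)+1)) ∧ (∃ u, σ s u ∈ D ((s:ℕ)+1)) then (1:ℝ) else 0) :=
          Finset.sum_congr rfl fun t _ => Finset.sum_comm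
      _ = ∑ t : Fin η, ∑ s : Fin η,
            ((Ω.filter fun σ => (∃ u, σ t u ∈ D ((t:ℕ)+1)) ∧ (∃ u, σ s u ∈ D ((s:ℕ)+1))).card : ℝ) :=
          Finset.sum_congr rfl fun t _ => Finset.sum_congr rfl fun s _ => by
            rw [Finset.sum_boole]
      _ = ∑ t : Fin η, (p t * (∏ r : Fin η, (N r:ℝ)^T)
            + p t * (μ - p t) * (∏ r : Fin η, (N r:ℝ)^T)) := by
          refine Finset.sum_congr rfl fun t _ => ?_
          rw [← Finset.add_sum_erase Finset.univ _ (Finset.mem_univ t)]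
          have hdiag : ((Ω.filter fun σ => (∃ u, σ t u ∈ D ((t:ℕ)+1))
              ∧ (∃ u, σ t u ∈ D ((t:ℕ)+1))).card : ℝ)
              = p t * ∏ r : Fin η, (N r:ℝ)^T := by
            have he : (Ω.filter fun σ => (∃ u, σ t u ∈ D ((t:ℕ)+1))
                ∧ (∃ u, σ t u ∈ D ((t:ℕ)+1)))
                = Ω.filter fun σ => ∃ u, σ t u ∈ D ((t:ℕ)+1) := by
              apply Finset.filter_congr
              intro σ _
              tauto
            rw [he, hΩ, Finset.filter_filter]
            exact hcR t
          have hoff : ∀ s ∈ Finset.univ.erase t,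
              ((Ω.filter fun σ => (∃ u, σ t u ∈ D ((t:ℕ)+1))
                ∧ (∃ u, σ s u ∈ D ((s:ℕ)+1))).card : ℝ)
              = p t * p s * ∏ r : Fin η, (N r:ℝ)^T := by
            intro s hs
            have hst : t ≠ s := fun h => (Finset.mem_erase.mp hs).1 h.symm
            rw [hΩ, Finset.filter_filter]
            exact hc2R t s hst
          rw [hdiag, Finset.sum_congr rfl hoff]
          have hsum_erase : ∑ s ∈ Finset.univ.erase t, p s = μ - p t := by
            rw [Finset.sum_erase_eq_sub (Finset.mem_univ t), hμ]
          have : ∑ s ∈ Finset.univ.erase t, p t * p s * ∏ r : Fin η, (N r:ℝ)^T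
              = p t * (μ - p t) * ∏ r : Fin η, (N r:ℝ)^T := by
            rw [← Finset.sum_mul, ← Finset.mul_sum, hsum_erase]
          rw [this]
      _ = μ * (∏ r : Fin η, (N r:ℝ)^T) + μ^2 * (∏ r : Fin η, (N r:ℝ)^T)
            - (∑ t : Fin η, (p t)^2) * (∏ r : Fin η, (N r:ℝ)^T) := by
          rw [Finset.sum_add_distrib, ← Finset.sum_mul, ← Finset.sum_mul]
          have hPM : (∑ t : Fin η, p t * (μ - p t))
              = μ * (∑ t : Fin η, p t) - ∑ t : Fin η, (p t)^2 := by
            rw [Finset.mul_sum, ← Finset.sum_sub_distrib]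
            exact Finset.sum_congr rfl fun t _ => by ring
          rw [hPM, ← hμ]
          ring
  have hV : ∑ σ ∈ Ω, ((X σ : ℝ) - μ)^2 ≤ μ * ∏ r : Fin η, (N r:ℝ)^T := by
    have hexp : ∑ σ ∈ Ω, ((X σ : ℝ) - μ)^2
        = ∑ σ ∈ Ω, ((X σ:ℝ)^2 - 2*μ*(X σ:ℝ) + μ^2) :=
      Finset.sum_congr rfl fun σ _ => by ring
    rw [hexp, Finset.sum_add_distrib, Finset.sum_sub_distrib, ← Finset.mul_sum,
      Finset.sum_const, nsmul_eq_mul, hS1, hS2, hBR]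
    have hsq : 0 ≤ ∑ t : Fin η, (p t)^2 := Finset.sum_nonneg fun t _ => sq_nonneg _
    nlinarith [hBpos]
  -- Chebyshev
  have hbad : (((Ω.filter fun σ => X σ < k).card : ℝ)) ≤ (∏ r : Fin η, (N r:ℝ)^T)/100 := by
    have hlb : ∀ σ ∈ Ω.filter fun σ => X σ < k, (μ - (k:ℝ))^2 ≤ ((X σ:ℝ) - μ)^2 := by
      intro σ hσ
      have hXσ : X σ < k := (Finset.mem_filter.mp hσ).2
      have h1 : (X σ:ℝ) ≤ (k:ℝ) - 1 := by
        have h2 : X σ + 1 ≤ k := hXσ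
        have h3 : ((X σ : ℕ):ℝ) + 1 ≤ (k:ℝ) := by exact_mod_cast h2
        linarith
      have h4 : μ - (k:ℝ) ≤ μ - (X σ:ℝ) := by linarith
      have h5 : 0 ≤ μ - (k:ℝ) := by nlinarith
      calc (μ - (k:ℝ))^2 ≤ (μ - (X σ:ℝ))^2 := by nlinarith
        _ = ((X σ:ℝ) - μ)^2 := by ring
    have hsum : (((Ω.filter fun σ => X σ < k).card : ℝ)) * (μ-(k:ℝ))^2
        ≤ ∑ σ ∈ Ω, ((X σ:ℝ)-μ)^2 := by
      calc (((Ω.filter fun σ => X σ < k).card : ℝ)) * (μ-(k:ℝ))^2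
          = ∑ σ ∈ Ω.filter fun σ => X σ < k, (μ-(k:ℝ))^2 := by
            rw [Finset.sum_const, nsmul_eq_mul]
        _ ≤ ∑ σ ∈ Ω.filter fun σ => X σ < k, ((X σ:ℝ)-μ)^2 := Finset.sum_le_sum hlb
        _ ≤ ∑ σ ∈ Ω, ((X σ:ℝ)-μ)^2 := Finset.sum_le_sum_of_subset_of_nonneg
            (Finset.filter_subset _ _) (fun σ _ _ => sq_nonneg _)
    have hBc : (((Ω.filter fun σ => X σ < k).card : ℝ)) ≥ 0 := Nat.cast_nonneg _
    have hμk2 : μ - (k:ℝ) ≥ μ/2 := by linarith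
    have hstep : (((Ω.filter fun σ => X σ < k).card : ℝ)) * (μ/2)^2
        ≤ μ * ∏ r : Fin η, (N r:ℝ)^T := by
      have hVV := le_trans hsum hV
      have hq1 : (μ/2)^2 ≤ (μ-(k:ℝ))^2 := by nlinarith
      have hq2 : (((Ω.filter fun σ => X σ < k).card : ℝ)) * (μ/2)^2
          ≤ (((Ω.filter fun σ => X σ < k).card : ℝ)) * (μ-(k:ℝ))^2 :=
        mul_le_mul_of_nonneg_left hq1 hBc
      exact le_trans hq2 hVV
    nlinarith [hstep, hBpos, mul_le_mul_of_nonneg_left hμ4 hBc]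
  -- good outcomes
  have hsplitΩ : (Ω.filter fun σ => X σ < k).card
      + (Ω.filter fun σ => ¬ X σ < k).card = Ω.card :=
    Finset.card_filter_add_card_filter_not _
  have hgood : (99:ℝ)/100 * (∏ r : Fin η, (N r:ℝ)^T)
      ≤ ((Ω.filter fun σ => ¬ X σ < k).card : ℝ) := by
    have hcast : ((Ω.filter fun σ => X σ < k).card : ℝ)
        + ((Ω.filter fun σ => ¬ X σ < k).card : ℝ) = (Ω.card : ℝ) := by
      exact_mod_cast congrArg (Nat.cast : ℕ → ℝ) hsplitΩ
    rw [hBR] at hcast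
    linarith
  -- subset of the target event
  have hsub : (Ω.filter fun σ => ¬ X σ < k) ⊆
      Finset.univ.filter (fun σ : Fin η → Fin T → Fin n =>
        (∀ (t : Fin η) (u : Fin T), σ t u ∈ S ((t : ℕ) + 1)) ∧
        ∃ s : Fin k → Fin n, StrictMono s ∧ StrictMono (f ∘ s) ∧
          ∀ l, ∃ (t : Fin η) (u : Fin T), s l = σ t u) := by
    intro σ hσ
    have hσ' := Finset.mem_filter.mp hσ
    have hbase : ∀ (t : Fin η) (u : Fin T), σ t u ∈ S ((t:ℕ)+1) :=
      (Finset.mem_filter.mp hσ'.1).2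
    have hkX : k ≤ X σ := Nat.le_of_not_lt hσ'.2
    rw [hX σ] at hkX
    set ts := (Finset.univ.filter fun t : Fin η =>
      ∃ u, σ t u ∈ D ((t:ℕ)+1)).orderEmbOfCardLe hkX with hts
    have htsmem : ∀ l : Fin k, ∃ u, σ (ts l) u ∈ D (((ts l : Fin η):ℕ)+1) := by
      intro l
      have := Finset.orderEmbOfCardLe_mem _ hkX l
      exact (Finset.mem_filter.mp this).2
    obtain ⟨s, hs1, hs2, hs3⟩ := hfirst σ hbase (fun l => ts l) (ts.strictMono) htsmem
    exact Finset.mem_filter.mpr ⟨Finset.mem_univ _, hbase, s, hs1, hs2, hs3⟩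
  refine ⟨hfirst, ?_, ?_⟩
  · -- expectation bound
    calc (400:ℝ) * k / 20 * (Ω.card : ℝ)
        ≤ μ * (∏ r : Fin η, (N r:ℝ)^T) := by
          rw [hBR]
          have h20 : (400:ℝ) * k / 20 = 20 * k := by ring
          rw [h20]
          have : (20:ℝ) * k ≤ μ := by linarith
          exact mul_le_mul_of_nonneg_right this (le_of_lt hBpos)
      _ = ∑ t : Fin η, p t * (∏ r : Fin η, (N r:ℝ)^T) := by rw [hμ, Finset.sum_mul]
      _ = ∑ t : Fin η, ((Finset.univ.filter (fun σ : Fin η → Fin T → Fin n =>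
            (∀ (t' : Fin η) (u : Fin T), σ t' u ∈ S ((t' : ℕ) + 1)) ∧
            ∃ u : Fin T, σ t u ∈ D ((t : ℕ) + 1))).card : ℝ) :=
          Finset.sum_congr rfl fun t _ => (hcR t).symm
  · -- probability bound
    calc (99:ℝ)/100 * (Ω.card : ℝ)
        = 99/100 * (∏ r : Fin η, (N r:ℝ)^T) := by rw [hBR]
      _ ≤ ((Ω.filter fun σ => ¬ X σ < k).card : ℝ) := hgood
      _ ≤ _ := by
          exact_mod_cast Nat.cast_le.mpr (Finset.card_le_card hsub)
end

section
/- Fix 0 < p < 1 and let n ≥ k ≥ 2 be powers of 2 with k = 2^h. For a uniformly random choice of i₁ < … < i_h ∈ [log₂ n] and f = f^↓ ∘ F_{i_h} ∘ … ∘ F_{i_1}, any fixed subset Q ⊆ {0,…,n−1} with |Q| ≤ p·C(log₂ n, h) contains a length-k increasing subsequence of f with probability strictly less than p. -/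
/-!
If `x < y` but flipping the bits of `I` reverses their order, then the highest bit `M(x, y)` at
which `x` and `y` differ lies in `I`. So an increasing subsequence of length `2 ^ #I` of `f_I`
inside `Q` is a set of `2 ^ #I` points of `Q` whose pairwise `M`-values lie in `I`: `Q` captures
`I`. Splitting `Q` at the highest bit `d` where its points differ, a set `I ∌ d` can only be
captured by one half, and a set `I ∋ d` forces both halves to capture `I \ {d}`; by induction
on `#Q`, at most `#Q` sets are captured. One of them is `∅`, so at most `#Q - 1 < p·C(m, h)`
sets of size `h ≥ 1` are.
-/

open scoped Classical

open Finset

namespace Nat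

/-- The paper's `M(x, y)`: the highest bit at which `x` and `y` differ (junk value `0` when
`x = y`). -/
def msb (x y : ℕ) : ℕ := (x ^^^ y).log2

variable {x y : ℕ}

theorem xor_ne_zero_of_ne (h : x ≠ y) : x ^^^ y ≠ 0 :=
  fun h0 => h (by simpa [Nat.xor_assoc] using congrArg (· ^^^ y) h0)

theorem msb_comm (x y : ℕ) : msb x y = msb y x := by
  rw [msb, msb, Nat.xor_comm]

theorem testBit_msb_ne (h : x ≠ y) : x.testBit (msb x y) ≠ y.testBit (msb x y) := by
  intro he
  have := Nat.testBit_log2 (xor_ne_zero_of_ne h)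
  rw [Nat.testBit_xor, ← msb, he] at this
  simp at this

theorem testBit_eq_of_msb_lt {j : ℕ} (hj : msb x y < j) : x.testBit j = y.testBit j := by
  by_cases h : x = y
  · rw [h]
  have hlt : x ^^^ y < 2 ^ j := (Nat.log2_lt (xor_ne_zero_of_ne h)).mp hj
  have := Nat.testBit_lt_two_pow hlt
  rw [Nat.testBit_xor] at this
  revert this
  cases x.testBit j <;> cases y.testBit j <;> simp

theorem le_msb_of_testBit_ne {j : ℕ} (hj : x.testBit j ≠ y.testBit j) : j ≤ msb x y :=
  not_lt.mp fun h => hj (testBit_eq_of_msb_lt h)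

theorem msb_eq_of_testBit {d : ℕ} (hd : x.testBit d ≠ y.testBit d)
    (habove : ∀ j, d < j → x.testBit j = y.testBit j) : msb x y = d := by
  refine le_antisymm (not_lt.mp fun h => ?_) (le_msb_of_testBit_ne hd)
  exact testBit_msb_ne (fun hxy => hd (by rw [hxy])) (habove _ h)

theorem testBit_msb_of_lt (h : x < y) :
    x.testBit (msb x y) = false ∧ y.testBit (msb x y) = true := by
  have hne := testBit_msb_ne h.ne
  cases hx : x.testBit (msb x y) <;> cases hy : y.testBit (msb x y) <;> simp_all
  exact h.not_gt (Nat.lt_of_testBit _ hy hx fun j hj => (testBit_eq_of_msb_lt hj).symm)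

theorem xor_lt_xor_of_lt {s : ℕ} (h : x < y) (hs : s.testBit (msb x y) = false) :
    x ^^^ s < y ^^^ s := by
  obtain ⟨hx, hy⟩ := testBit_msb_of_lt h
  refine Nat.lt_of_testBit (msb x y) ?_ ?_ fun j hj => ?_
  · rw [Nat.testBit_xor, hx, hs]; rfl
  · rw [Nat.testBit_xor, hy, hs]; rfl
  · rw [Nat.testBit_xor, Nat.testBit_xor, testBit_eq_of_msb_lt hj]

end Nat

def flipBits (l : List ℕ) (z : ℕ) : ℕ := l.foldl (fun a i => a ^^^ 2 ^ i) z

theorem flipBits_eq_xor (l : List ℕ) (z : ℕ) : flipBits l z = z ^^^ flipBits l 0 := by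
  induction l generalizing z with
  | nil => simp [flipBits]
  | cons i l ih =>
    simp only [flipBits, List.foldl_cons] at ih ⊢
    rw [ih (z ^^^ 2 ^ i), ih (0 ^^^ 2 ^ i), Nat.zero_xor, Nat.xor_assoc]

theorem testBit_flipBits_zero {l : List ℕ} {j : ℕ} (hj : j ∉ l) :
    (flipBits l 0).testBit j = false := by
  induction l with
  | nil => simp [flipBits]
  | cons i l ih =>
    rw [List.mem_cons, not_or] at hj
    rw [flipBits, List.foldl_cons, ← flipBits, flipBits_eq_xor, Nat.testBit_xor, ih hj.2,
      Nat.zero_xor, Nat.testBit_two_pow, decide_eq_false (Ne.symm hj.1)]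
    rfl

theorem msb_mem_of_flipBits_lt {l : List ℕ} {x y : ℕ} (hxy : x < y)
    (hflip : flipBits l y < flipBits l x) : Nat.msb x y ∈ l := by
  by_contra hj
  rw [flipBits_eq_xor l x, flipBits_eq_xor l y] at hflip
  exact hflip.not_gt (Nat.xor_lt_xor_of_lt hxy (testBit_flipBits_zero hj))

/-- The function `f_{i₁,…,iₕ} = f^↓ ∘ F_{iₕ} ∘ ⋯ ∘ F_{i₁}` on `{0, …, 2 ^ m - 1}`,
for `I = {i₁ < ⋯ < iₕ}`. -/
def flipDown (m : ℕ) (I : Finset ℕ) (z : ℕ) : ℕ := 2 ^ m - 1 - flipBits (I.sort (· ≤ ·)) z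

theorem msb_mem_of_flipDown_lt {m : ℕ} {I : Finset ℕ} {x y : ℕ} (hxy : x < y)
    (hf : flipDown m I x < flipDown m I y) : Nat.msb x y ∈ I :=
  (mem_sort _).mp <|
    msb_mem_of_flipBits_lt (l := I.sort (· ≤ ·)) hxy (by unfold flipDown at hf; omega)

/-- Set form of the paper's `I ∈ bin-prof_{#I}(Q)`. -/
def Captures (Q I : Finset ℕ) : Prop :=
  ∃ C ⊆ Q, #C = 2 ^ #I ∧ ∀ x ∈ C, ∀ y ∈ C, x ≠ y → Nat.msb x y ∈ I

theorem card_le_two_pow_of_msb_mem {C I : Finset ℕ}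
    (h : ∀ x ∈ C, ∀ y ∈ C, x ≠ y → Nat.msb x y ∈ I) : #C ≤ 2 ^ #I := by
  rw [← card_powerset]
  refine card_le_card_of_injOn (fun x => I.filter fun i => x.testBit i)
    (fun x _ => mem_powerset.mpr (filter_subset _ _)) fun x hx y hy hfxy => ?_
  by_contra hne
  have hmem := h x hx y hy hne
  have := congrArg (Nat.msb x y ∈ ·) hfxy
  simp only [mem_filter, hmem, true_and, eq_iff_iff] at this
  exact Nat.testBit_msb_ne hne (Bool.eq_iff_iff.mpr this)

theorem captures_of_increasing_subseq {m : ℕ} {Q I : Finset ℕ} {x : ℕ → ℕ}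
    (hxQ : ∀ t < 2 ^ #I, x t ∈ Q)
    (hx : ∀ t, t + 1 < 2 ^ #I →
      x t < x (t + 1) ∧ flipDown m I (x t) < flipDown m I (x (t + 1))) :
    Captures Q I := by
  set N := 2 ^ #I
  have hN : 0 < N := Nat.two_pow_pos _
  have hmem : ∀ t ∈ range N, t ∈ Set.Iic (N - 1) := fun t ht => by
    simp only [mem_range] at ht; simp only [Set.mem_Iic]; omega
  have hx_mono : StrictMonoOn x (Set.Iic (N - 1)) :=
    strictMonoOn_Iic_of_lt_succ fun t ht => (hx t (by omega)).1
  have hf_mono : StrictMonoOn (flipDown m I ∘ x) (Set.Iic (N - 1)) :=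
    strictMonoOn_Iic_of_lt_succ fun t ht => (hx t (by omega)).2
  have hmsb : ∀ s ∈ range N, ∀ t ∈ range N, s < t → Nat.msb (x s) (x t) ∈ I :=
    fun s hs t ht hst => msb_mem_of_flipDown_lt (hx_mono (hmem s hs) (hmem t ht) hst)
      (hf_mono (hmem s hs) (hmem t ht) hst)
  refine ⟨(range N).image x, fun _ hq => ?_, ?_, ?_⟩
  · obtain ⟨t, ht, rfl⟩ := mem_image.mp hq
    exact hxQ t (mem_range.mp ht)
  · rw [card_image_of_injOn (hx_mono.injOn.mono hmem), card_range]
  · simp only [mem_image]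
    rintro _ ⟨s, hs, rfl⟩ _ ⟨t, ht, rfl⟩ hne
    rcases lt_or_gt_of_ne (fun hst : s = t => hne (by rw [hst])) with hst | hst
    · exact hmsb s hs t ht hst
    · rw [Nat.msb_comm]; exact hmsb t ht s hs hst

theorem card_le_card_add_card_of_erase {α : Type*} [DecidableEq α]
    {𝒞 𝒜 ℬ : Finset (Finset α)} (d : α) (hnot : ∀ I ∈ 𝒞, d ∉ I → I ∈ 𝒜 ∨ I ∈ ℬ)
    (hmem : ∀ I ∈ 𝒞, d ∈ I → I.erase d ∈ 𝒜 ∧ I.erase d ∈ ℬ) : #𝒞 ≤ #𝒜 + #ℬ := by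
  have hwith : #(𝒞.filter (d ∈ ·)) ≤ #(𝒜 ∩ ℬ) :=
    card_le_card_of_injOn (·.erase d)
      (fun I hI => mem_inter.mpr (hmem I (mem_filter.mp hI).1 (mem_filter.mp hI).2))
      ((erase_injOn' d).mono fun I hI => (mem_filter.mp hI).2)
  have hwithout : #(𝒞.filter (d ∉ ·)) ≤ #(𝒜 ∪ ℬ) :=
    card_le_card fun I hI => mem_union.mpr (hnot I (mem_filter.mp hI).1 (mem_filter.mp hI).2)
  calc #𝒞 = #(𝒞.filter (d ∈ ·)) + #(𝒞.filter (d ∉ ·)) :=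
        (card_filter_add_card_filter_not _).symm
    _ ≤ #(𝒜 ∩ ℬ) + #(𝒜 ∪ ℬ) := add_le_add hwith hwithout
    _ = #𝒜 + #ℬ := by rw [add_comm, card_union_add_card_inter]

theorem exists_highest_testBit_ne {Q : Finset ℕ} (hQ : Q.Nontrivial) :
    ∃ d, (∃ x ∈ Q, ∃ y ∈ Q, x.testBit d ≠ y.testBit d) ∧
      ∀ x ∈ Q, ∀ y ∈ Q, ∀ j, d < j → x.testBit j = y.testBit j := by
  obtain ⟨x, hx, y, hy, hne⟩ := hQ
  obtain ⟨⟨a, b⟩, hab, hmax⟩ := Q.offDiag.exists_max_image (fun p => Nat.msb p.1 p.2)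
    ⟨(x, y), mem_offDiag.mpr ⟨hx, hy, hne⟩⟩
  obtain ⟨ha, hb, hne⟩ := mem_offDiag.mp hab
  refine ⟨Nat.msb a b, ⟨a, ha, b, hb, Nat.testBit_msb_ne hne⟩, fun x hx y hy j hj => ?_⟩
  by_contra hbit
  have hne : x ≠ y := fun h => hbit (by rw [h])
  exact hbit (Nat.testBit_eq_of_msb_lt
    ((hmax (x, y) (mem_offDiag.mpr ⟨hx, hy, hne⟩)).trans_lt hj))

section Split

variable {Q I : Finset ℕ} {d : ℕ}

theorem Captures.exists_filter_testBit (hQI : Captures Q I) (hd : d ∉ I)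
    (habove : ∀ x ∈ Q, ∀ y ∈ Q, ∀ j, d < j → x.testBit j = y.testBit j) :
    ∃ b, Captures (Q.filter fun x => x.testBit d = b) I := by
  obtain ⟨C, hCQ, hC, hmsb⟩ := hQI
  obtain ⟨c, hc⟩ : C.Nonempty := card_pos.mp (hC ▸ Nat.two_pow_pos _)
  refine ⟨c.testBit d, C, fun x hx => mem_filter.mpr ⟨hCQ hx, ?_⟩, hC, hmsb⟩
  by_contra hbit
  have hne : x ≠ c := fun h => hbit (by rw [h])
  have hmsb_eq : Nat.msb x c = d :=
    Nat.msb_eq_of_testBit hbit fun j hj => habove x (hCQ hx) c (hCQ hc) j hj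
  exact hd (hmsb_eq ▸ hmsb x hx c hc hne)

theorem Captures.filter_testBit_erase (hQI : Captures Q I) (hd : d ∈ I) (b : Bool) :
    Captures (Q.filter fun x => x.testBit d = b) (I.erase d) := by
  obtain ⟨C, hCQ, hC, hmsb⟩ := hQI
  -- Both halves of `C` at bit `d` have at most `2 ^ (#I - 1)` points and together `2 ^ #I`.
  have hsame : ∀ C' ⊆ C, (∀ x ∈ C', ∀ y ∈ C', x.testBit d = y.testBit d) →
      ∀ x ∈ C', ∀ y ∈ C', x ≠ y → Nat.msb x y ∈ I.erase d := fun C' hC' hbit x hx y hy hne =>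
    mem_erase.mpr
      ⟨fun h => Nat.testBit_msb_ne hne (h ▸ hbit x hx y hy), hmsb x (hC' hx) y (hC' hy) hne⟩
  have hmsb_b := hsame (C.filter fun x => x.testBit d = b) (filter_subset _ _)
    fun x hx y hy => by rw [(mem_filter.mp hx).2, (mem_filter.mp hy).2]
  have hmsb_not := hsame (C.filter fun x => ¬ x.testBit d = b) (filter_subset _ _)
    fun x hx y hy => by
      rw [Bool.eq_not_of_ne (mem_filter.mp hx).2, Bool.eq_not_of_ne (mem_filter.mp hy).2]
  have hsum := card_filter_add_card_filter_not (s := C) fun x => x.testBit d = b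
  have hcard : #C = 2 * 2 ^ #(I.erase d) := by
    rw [hC, ← card_erase_add_one hd, pow_succ, mul_comm]
  have hle := card_le_two_pow_of_msb_mem hmsb_b
  have hle' := card_le_two_pow_of_msb_mem hmsb_not
  exact ⟨_, filter_subset_filter _ hCQ, by omega, hmsb_b⟩

end Split

theorem Captures.two_pow_card_le {Q I : Finset ℕ} (h : Captures Q I) : 2 ^ #I ≤ #Q := by
  obtain ⟨C, hCQ, hC, -⟩ := h
  exact hC ▸ card_le_card hCQ

theorem card_filter_captures_le (S Q : Finset ℕ) : #(S.powerset.filter (Captures Q)) ≤ #Q := by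
  induction Q using Finset.strongInduction with
  | H Q ih =>
  by_cases hQ : Q.Nontrivial
  swap
  · have hQ1 : #Q ≤ 1 := not_lt.mp (mt one_lt_card_iff_nontrivial.mp hQ)
    rcases Q.eq_empty_or_nonempty with rfl | hne
    · refine (card_eq_zero.mpr (filter_eq_empty_iff.mpr fun I _ hI => ?_)).le
      simpa using hI.two_pow_card_le
    · refine (card_le_card fun I hI => mem_singleton.mpr (card_eq_zero.mp ?_)).trans
        ((card_singleton _).trans_le (card_pos.mpr hne))
      by_contra h0
      have := (mem_filter.mp hI).2.two_pow_card_le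
      have := Nat.one_lt_two_pow h0
      omega
  obtain ⟨d, ⟨x, hx, y, hy, hxy⟩, habove⟩ := exists_highest_testBit_ne hQ
  set half := fun b : Bool => Q.filter fun z => z.testBit d = b
  have hhalf_lt : ∀ b, half b ⊂ Q := fun b => filter_ssubset.mpr <|
    if h : x.testBit d = b then ⟨y, hy, fun h' => hxy (h.trans h'.symm)⟩ else ⟨x, hx, h⟩
  have hsplit : #(half true) + #(half false) = #Q := by
    simpa using card_filter_add_card_filter_not (s := Q) fun z => z.testBit d = true
  calc #(S.powerset.filter (Captures Q))
      ≤ #(S.powerset.filter (Captures (half true))) +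
          #(S.powerset.filter (Captures (half false))) := by
        refine card_le_card_add_card_of_erase d (fun I hI hd => ?_) fun I hI hd => ?_
        · obtain ⟨hIS, hcap⟩ := mem_filter.mp hI
          obtain ⟨b, hb⟩ := hcap.exists_filter_testBit hd habove
          cases b
          · exact Or.inr (mem_filter.mpr ⟨hIS, hb⟩)
          · exact Or.inl (mem_filter.mpr ⟨hIS, hb⟩)
        · obtain ⟨hIS, hcap⟩ := mem_filter.mp hI
          have hIS' := mem_powerset.mpr ((erase_subset d I).trans (mem_powerset.mp hIS))
          exact ⟨mem_filter.mpr ⟨hIS', hcap.filter_testBit_erase hd true⟩,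
            mem_filter.mpr ⟨hIS', hcap.filter_testBit_erase hd false⟩⟩
    _ ≤ #(half true) + #(half false) :=
        add_le_add (ih _ (hhalf_lt true)) (ih _ (hhalf_lt false))
    _ = #Q := hsplit

theorem captures_empty {Q : Finset ℕ} {q : ℕ} (hq : q ∈ Q) : Captures Q ∅ :=
  ⟨{q}, singleton_subset_iff.mpr hq, by simp, by simp⟩

theorem card_lt_of_forall_captures {S Q : Finset ℕ} {𝓕 : Finset (Finset ℕ)} {c : ℝ}
    (hc : 0 < c) (hQ : (#Q : ℝ) ≤ c) (h𝓕 : ∀ I ∈ 𝓕, I ⊆ S ∧ I.Nonempty ∧ Captures Q I) :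
    (#𝓕 : ℝ) < c := by
  rcases 𝓕.eq_empty_or_nonempty with rfl | ⟨I₀, hI₀⟩
  · simpa using hc
  obtain ⟨q, hq⟩ : Q.Nonempty :=
    card_pos.mp ((Nat.two_pow_pos _).trans_le (h𝓕 I₀ hI₀).2.2.two_pow_card_le)
  have hsub : 𝓕 ⊆ (S.powerset.filter (Captures Q)).erase ∅ := fun I hI =>
    mem_erase.mpr ⟨(h𝓕 I hI).2.1.ne_empty,
      mem_filter.mpr ⟨mem_powerset.mpr (h𝓕 I hI).1, (h𝓕 I hI).2.2⟩⟩
  have hlt : #𝓕 < #Q :=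
    calc #𝓕 ≤ #((S.powerset.filter (Captures Q)).erase ∅) := card_le_card hsub
      _ < #(S.powerset.filter (Captures Q)) :=
        card_erase_lt_of_mem (mem_filter.mpr ⟨empty_mem_powerset S, captures_empty hq⟩)
      _ ≤ #Q := card_filter_captures_le S Q
  exact (Nat.cast_lt.mpr hlt).trans_le hQ

theorem stmt19_general (p : ℝ) (hp0 : 0 < p) (m h : ℕ) (hh1 : 1 ≤ h) (hhm : h ≤ m)
    (Q : Finset ℕ) (hQcard : (Q.card : ℝ) ≤ p * (m.choose h)) :
    ((((Finset.range m).powersetCard h).filter (fun I =>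
        ∃ x : ℕ → ℕ, (∀ t < 2 ^ h, x t ∈ Q) ∧
          (∀ t, t + 1 < 2 ^ h → x t < x (t + 1)) ∧
          (∀ t, t + 1 < 2 ^ h →
            2 ^ m - 1 - (I.sort (· ≤ ·)).foldl (fun a i => a ^^^ 2 ^ i) (x t)
              < 2 ^ m - 1 - (I.sort (· ≤ ·)).foldl (fun a i => a ^^^ 2 ^ i) (x (t + 1))))).card : ℝ)
      < p * (m.choose h) := by
  have hpos : 0 < p * m.choose h := mul_pos hp0 (Nat.cast_pos.mpr (Nat.choose_pos hhm))
  refine card_lt_of_forall_captures (S := range m) hpos hQcard fun I hI => ?_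
  obtain ⟨hIm, rfl⟩ := mem_powersetCard.mp (mem_filter.mp hI).1
  obtain ⟨x, hxQ, hx_mono, hx_flip⟩ := (mem_filter.mp hI).2
  exact ⟨hIm, card_pos.mp (by omega),
    captures_of_increasing_subseq (m := m) hxQ fun t ht => ⟨hx_mono t ht, hx_flip t ht⟩⟩

/-- Yao-style lower bound core: for `n = 2^m`, `k = 2^h`, and a query set `Q` with
`|Q| ≤ p·C(m,h)`, the number of choices `i_1 < … < i_h` for which `Q` contains a length-`k`
increasing subsequence of `f_{i_1,…,i_h} = f^↓ ∘ F_{i_h} ∘ … ∘ F_{i_1}` is strictly less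
than `p·C(m,h)`; i.e. the uniformly random `f_{i_1,…,i_h}` is caught with probability
strictly less than `p`. -/
theorem stmt19 (p : ℝ) (hp0 : 0 < p) (hp1 : p < 1) (m h : ℕ) (hh1 : 1 ≤ h) (hhm : h ≤ m)
    (Q : Finset ℕ) (hQ : Q ⊆ Finset.range (2 ^ m))
    (hQcard : (Q.card : ℝ) ≤ p * (m.choose h)) :
    ((((Finset.range m).powersetCard h).filter (fun I =>
        ∃ x : ℕ → ℕ, (∀ t < 2 ^ h, x t ∈ Q) ∧
          (∀ t, t + 1 < 2 ^ h → x t < x (t + 1)) ∧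
          (∀ t, t + 1 < 2 ^ h →
            2 ^ m - 1 - (I.sort (· ≤ ·)).foldl (fun a i => a ^^^ 2 ^ i) (x t)
              < 2 ^ m - 1 - (I.sort (· ≤ ·)).foldl (fun a i => a ^^^ 2 ^ i) (x (t + 1))))).card : ℝ)
      < p * (m.choose h) :=
  stmt19_general p hp0 m h hh1 hhm Q hQcard
end
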